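/- arXiv:1111.5064 — 8 statements merged into one kernel-verified Lean document; each statement's English description precedes it below -/
import Mathlib

section
/- Let Q be a finite acyclic quiver (containing no directed cycles) and let R be a set of composable pairs of arrows (pairs (a, b) with h(a) = t(b), representing the length-two paths ba generating the ideal) satisfying the gentle conditions: (i) every vertex is the head of at most two arrows and the tail of at most two arrows; (ii) for each arrow b there is at most one arrow a with t(a) = h(b) and (b, a) ∉ R, and at most one arrow c' with h(c') = t(b) and (c', b) ∉ R; (iii) for each arrow b there is at most one arrow a with t(a) = h(b) and (b, a) ∈ R, and at most one arrow c' with h(c') = t(b) and (c', b) ∈ R. Then there exists a coloring c of Q such that R is exactly the set of pairs (a, b) with h(a) = t(b) and c(a) = c(b). -/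
section Defs

variable {V A S : Type}

/-- `c` is a coloring of the quiver `(tl, hd)`: each color class is the arrow set of a
directed path (enumerated by a duplicate-free list chained head-to-tail). -/
def IsColoring (tl hd : A → V) (c : A → S) : Prop :=
  ∀ s : S, ∃ l : List A, l.Nodup ∧ (∀ a : A, a ∈ l ↔ c a = s) ∧
    l.Chain' (fun a b => hd a = tl b)

/-- Some arrow of color `s` is incident to vertex `x`. -/
def Incident (tl hd : A → V) (c : A → S) (x : V) (s : S) : Prop :=
  ∃ a : A, c a = s ∧ (tl a = x ∨ hd a = x)

/-- `(Q, c)` is a colored gentle quiver: `c` is a coloring, at most two colors are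
incident to each vertex, and for each vertex and color there is at most one arrow of
that color with that tail and at most one with that head. -/
def ColoredGentle (tl hd : A → V) (c : A → S) : Prop :=
  IsColoring tl hd c ∧
  (∀ (x : V) (s₁ s₂ s₃ : S), Incident tl hd c x s₁ → Incident tl hd c x s₂ →
    Incident tl hd c x s₃ → s₁ = s₂ ∨ s₁ = s₃ ∨ s₂ = s₃) ∧
  (∀ (x : V) (s : S) (a b : A), tl a = x → tl b = x → c a = s → c b = s → a = b) ∧
  (∀ (x : V) (s : S) (a b : A), hd a = x → hd b = x → c a = s → c b = s → a = b)

/-- `r` is a rank map for the dimension vector `β`. -/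
def IsRankMap (tl hd : A → V) (c : A → S) (β : V → ℕ) (r : A → ℕ) : Prop :=
  (∀ a : A, r a ≤ min (β (tl a)) (β (hd a))) ∧
  (∀ a₁ a₂ : A, hd a₁ = tl a₂ → c a₁ = c a₂ → r a₂ + r a₁ ≤ β (hd a₁))

/-- `r` is a maximal rank map for `β`. -/
def MaximalRankMap (tl hd : A → V) (c : A → S) (β : V → ℕ) (r : A → ℕ) : Prop :=
  IsRankMap tl hd c β r ∧
  ¬ ∃ r' : A → ℕ, IsRankMap tl hd c β r' ∧ (∀ a : A, r a ≤ r' a) ∧ r' ≠ r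

/-- `ε` is a sign function on `(Q, c)` (its values only matter on incident pairs). -/
def IsSignFun (tl hd : A → V) (c : A → S) (ε : V → S → ℤ) : Prop :=
  (∀ x s, Incident tl hd c x s → ε x s = 1 ∨ ε x s = -1) ∧
  (∀ x s₁ s₂, Incident tl hd c x s₁ → Incident tl hd c x s₂ → s₁ ≠ s₂ →
    ε x s₁ = - ε x s₂)

/-- Index (at level `tl a`) of the tail endpoint of the edge `e(a, i)`. -/
def srcIdx (tl : A → V) (β : V → ℕ) (c : A → S) (ε : V → S → ℤ) (a : A) (i : ℕ) : ℕ :=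
  if ε (tl a) (c a) = 1 then i else β (tl a) - i + 1

/-- Index (at level `hd a`) of the head endpoint of the edge `e(a, i)`. -/
def tgtIdx (hd : A → V) (β : V → ℕ) (c : A → S) (ε : V → S → ℤ) (a : A) (i : ℕ) : ℕ :=
  if ε (hd a) (c a) = -1 then i else β (hd a) - i + 1

/-- The vertex `v_j^x` is contained in the edge `e(a, i)` of the up-and-down graph. -/
def InEdge (tl hd : A → V) (β : V → ℕ) (c : A → S) (ε : V → S → ℤ) (r : A → ℕ)
    (a : A) (i : ℕ) (x : V) (j : ℕ) : Prop :=
  1 ≤ i ∧ i ≤ r a ∧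
    ((x = tl a ∧ j = srcIdx tl β c ε a i) ∨ (x = hd a ∧ j = tgtIdx hd β c ε a i))

/-- The vertices `p` and `q` are joined by an edge labeled `a` in the up-and-down graph. -/
def UDJoined (tl hd : A → V) (β : V → ℕ) (c : A → S) (ε : V → S → ℤ) (r : A → ℕ)
    (a : A) (p q : V × ℕ) : Prop :=
  ∃ i : ℕ, 1 ≤ i ∧ i ≤ r a ∧
    ((p = (tl a, srcIdx tl β c ε a i) ∧ q = (hd a, tgtIdx hd β c ε a i)) ∨
     (q = (tl a, srcIdx tl β c ε a i) ∧ p = (hd a, tgtIdx hd β c ε a i)))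

/-- Adjacency in the up-and-down graph. -/
def UDAdj (tl hd : A → V) (β : V → ℕ) (c : A → S) (ε : V → S → ℤ) (r : A → ℕ)
    (p q : V × ℕ) : Prop :=
  ∃ a : A, UDJoined tl hd β c ε r a p q

/-- A direct path of length `n` in the up-and-down graph: position `k` of the path is the
vertex `v_{idx k}^{xs k}`, and the `k`-th edge is the edge `e(as k, ids k)`, whose tail
endpoint is at position `k` and whose head endpoint is at position `k+1`. -/
def IsDirectPath (tl hd : A → V) (β : V → ℕ) (c : A → S) (ε : V → S → ℤ) (r : A → ℕ)
    (n : ℕ) (xs : Fin (n+1) → V) (as : Fin n → A) (ids : Fin n → ℕ)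
    (idx : Fin (n+1) → ℕ) : Prop :=
  ∀ k : Fin n, 1 ≤ ids k ∧ ids k ≤ r (as k) ∧
    tl (as k) = xs k.castSucc ∧ hd (as k) = xs k.succ ∧
    idx k.castSucc = srcIdx tl β c ε (as k) (ids k) ∧
    idx k.succ = tgtIdx hd β c ε (as k) (ids k)

end Defs

section Aux

open Relation

variable {V A : Type}

open scoped Classical in
noncomputable def pfun (R : A → A → Prop) : A → A :=
  fun b => if h : ∃ d, R d b then h.choose else b

open scoped Classical in
noncomputable def Ffun (R : A → A → Prop) : A → Option A :=
  fun b => if h : ∃ d, R b d then some h.choose else none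

noncomputable def iterF (R : A → A → Prop) : ℕ → A → Option A
  | 0, x => some x
  | n+1, x => (Ffun R x).bind (iterF R n)

noncomputable def chainList (R : A → A → Prop) : ℕ → A → List A
  | 0, x => [x]
  | n+1, x => x :: (match Ffun R x with
      | none => []
      | some y => chainList R n y)

lemma transGen_list (tl hd : A → V) {x y : A}
    (h : Relation.TransGen (fun u v : A => hd u = tl v) x y) :
    ∃ (l : List A) (aL : A), l ≠ [] ∧ l.Chain' (fun u v => hd u = tl v) ∧
      l.head? = some x ∧ l.getLast? = some aL ∧ hd aL = tl y := by
  induction h with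
  | single h => exact ⟨[x], x, by simp, List.IsChain.singleton _, rfl, rfl, h⟩
  | @tail b c hxb hbc ih =>
      obtain ⟨l, aL, hne, hch, hhd, hlast, hstep⟩ := ih
      refine ⟨l ++ [b], b, by simp, ?_, ?_, ?_, hbc⟩
      · unfold List.Chain'; rw [List.isChain_append]
        refine ⟨hch, List.isChain_singleton _, ?_⟩
        intro u hu v hv
        simp at hv
        rw [hlast] at hu
        simp at hu
        subst hu; subst hv; exact hstep
      · rw [List.head?_append, hhd]; rfl
      · simp

end Aux

section Aux2

open Relation

variable {V A : Type} (R : A → A → Prop)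

lemma Ffun_some {b d : A} (h : Ffun R b = some d) : R b d := by
  unfold Ffun at h
  split at h
  · rename_i hex
    cases h
    exact hex.choose_spec
  · cases h

lemma Ffun_eq_some (hu : ∀ b d d' : A, R b d → R b d' → d = d') {b d : A} (h : R b d) :
    Ffun R b = some d := by
  unfold Ffun
  split
  · rename_i hex
    exact congrArg some (hu b _ _ hex.choose_spec h)
  · rename_i hex
    exact absurd ⟨d, h⟩ hex

lemma pfun_spec' {b : A} (h : ∃ d, R d b) : R (pfun R b) b := by
  unfold pfun
  rw [dif_pos h]
  exact h.choose_spec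

lemma pfun_eq (hu : ∀ b d d' : A, R d b → R d' b → d = d') {d b : A} (h : R d b) :
    pfun R b = d :=
  hu b _ _ (pfun_spec' R ⟨d, h⟩) h

lemma pfun_root {b : A} (h : ¬ ∃ d, R d b) : pfun R b = b := dif_neg h

lemma pfun_root_iter {y : A} (h : ¬ ∃ d, R d y) (m : ℕ) : (pfun R)^[m] y = y :=
  Function.iterate_fixed (pfun_root R h) m

lemma noCycR (tl hd : A → V)
    (hacyc : ¬ ∃ l : List A, l ≠ [] ∧ l.Chain' (fun a b => hd a = tl b) ∧
      ∃ a₀ aL : A, l.head? = some a₀ ∧ l.getLast? = some aL ∧ hd aL = tl a₀)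
    (hsub : ∀ u v : A, R u v → hd u = tl v) (x : A) : ¬ TransGen R x x := by
  intro h
  obtain ⟨l, aL, hne, hch, hhd, hlast, hstep⟩ :=
    transGen_list tl hd (TransGen.mono hsub _ _ h)
  exact hacyc ⟨l, hne, hch, x, aL, hhd, hlast, hstep⟩

lemma iterF_add (m n : ℕ) (x : A) :
    iterF R (m + n) x = (iterF R m x).bind (iterF R n) := by
  induction m generalizing x with
  | zero => simp [iterF]
  | succ m ih =>
      have : m + 1 + n = (m + n) + 1 := by omega
      rw [this]
      show (Ffun R x).bind (iterF R (m + n)) = ((Ffun R x).bind (iterF R m)).bind (iterF R n)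
      cases Ffun R x with
      | none => rfl
      | some z => simp [ih]

lemma iterF_succ' (n : ℕ) (x : A) :
    iterF R (n + 1) x = (iterF R n x).bind (Ffun R) := by
  rw [iterF_add R n 1 x]
  cases iterF R n x with
  | none => rfl
  | some z =>
      show iterF R 1 z = Ffun R z
      show (Ffun R z).bind (iterF R 0) = Ffun R z
      cases Ffun R z <;> rfl

lemma iterF_reach {k : ℕ} {x y : A} (h : iterF R k x = some y) : ReflTransGen R x y := by
  induction k generalizing x with
  | zero => cases h; exact ReflTransGen.refl
  | succ k ih =>
      cases hF : Ffun R x with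
      | none => rw [show iterF R (k+1) x = (Ffun R x).bind (iterF R k) from rfl, hF] at h; cases h
      | some z =>
          rw [show iterF R (k+1) x = (Ffun R x).bind (iterF R k) from rfl, hF] at h
          exact ReflTransGen.head (Ffun_some R hF) (ih h)

lemma iterF_transGen {k : ℕ} {x y : A} (hk : 1 ≤ k) (h : iterF R k x = some y) :
    TransGen R x y := by
  obtain ⟨k', rfl⟩ : ∃ k', k = k' + 1 := ⟨k - 1, by omega⟩
  cases hF : Ffun R x with
  | none => rw [show iterF R (k'+1) x = (Ffun R x).bind (iterF R k') from rfl, hF] at h; cases h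
  | some z =>
      rw [show iterF R (k'+1) x = (Ffun R x).bind (iterF R k') from rfl, hF] at h
      exact TransGen.head' (Ffun_some R hF) (iterF_reach R h)

lemma reach_iterF (hu : ∀ b d d' : A, R b d → R b d' → d = d') {x y : A}
    (h : ReflTransGen R x y) : ∃ k, iterF R k x = some y := by
  induction h with
  | refl => exact ⟨0, rfl⟩
  | tail hxb hbc ih =>
      obtain ⟨k, hk⟩ := ih
      refine ⟨k + 1, ?_⟩
      rw [iterF_succ', hk]
      exact Ffun_eq_some R hu hbc

lemma iterF_lt_card [Fintype A] (hnc : ∀ x : A, ¬ TransGen R x x) {k : ℕ} {s x : A}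
    (h : iterF R k s = some x) : k < Fintype.card A := by
  have hdef : ∀ j : Fin (k + 1), ∃ y, iterF R j.1 s = some y := by
    intro j
    have hj : k = j.1 + (k - j.1) := by omega
    rw [hj, iterF_add] at h
    exact Option.bind_eq_some_iff.mp h |>.imp fun y hy => hy.1
  choose f hf using hdef
  have hlt : ∀ i j : Fin (k + 1), i < j → TransGen R (f i) (f j) := by
    intro i j hij
    have : iterF R ((j : ℕ) - i + i.1) s = some (f j) := by
      rw [show (j : ℕ) - i + i.1 = j.1 from by omega]; exact hf j
    rw [show (j : ℕ) - i + i.1 = i.1 + ((j:ℕ) - i) from by omega, iterF_add, hf i] at this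
    exact iterF_transGen R (by omega) this
  have hinj : Function.Injective f := by
    intro i j hfij
    by_contra hne
    rcases lt_or_gt_of_ne (fun h' : i = j => hne h') with h' | h'
    · exact hnc (f i) (hfij ▸ hlt i j h')
    · exact hnc (f j) (hfij ▸ hlt j i h')
  have := Fintype.card_le_of_injective f hinj
  simp at this
  omega

end Aux2

section Aux3

open Relation

variable {V A : Type} (R : A → A → Prop)

lemma chainList_head? (n : ℕ) (x : A) : (chainList R n x).head? = some x := by
  cases n <;> rfl

lemma mem_chainList (n : ℕ) (x a : A) :
    a ∈ chainList R n x ↔ ∃ k ≤ n, iterF R k x = some a := by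
  induction n generalizing x with
  | zero =>
      constructor
      · intro h
        simp [chainList] at h
        exact ⟨0, le_refl 0, by simp [iterF, h]⟩
      · rintro ⟨k, hk, hit⟩
        interval_cases k
        simp [iterF] at hit
        simp [chainList, hit]
  | succ n ih =>
      cases hF : Ffun R x with
      | none =>
          show a ∈ x :: _ ↔ _
          rw [hF]
          constructor
          · intro h
            simp at h
            exact ⟨0, by omega, by simp [iterF, h]⟩
          · rintro ⟨k, hk, hit⟩
            match k with
            | 0 => simp [iterF] at hit; simp [hit]
            | k+1 =>
                rw [show iterF R (k+1) x = (Ffun R x).bind (iterF R k) from rfl, hF] at hit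
                cases hit
      | some z =>
          show a ∈ x :: _ ↔ _
          rw [hF]
          simp only [List.mem_cons, ih]
          constructor
          · rintro (rfl | ⟨k, hk, hit⟩)
            · exact ⟨0, by omega, rfl⟩
            · refine ⟨k + 1, by omega, ?_⟩
              rw [show iterF R (k+1) x = (Ffun R x).bind (iterF R k) from rfl, hF]
              exact hit
          · rintro ⟨k, hk, hit⟩
            match k with
            | 0 => cases hit; exact Or.inl rfl
            | k+1 =>
                rw [show iterF R (k+1) x = (Ffun R x).bind (iterF R k) from rfl, hF] at hit
                exact Or.inr ⟨k, by omega, hit⟩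

lemma chain'_chainList (tl hd : A → V) (hsub : ∀ u v : A, R u v → hd u = tl v)
    (n : ℕ) (x : A) : (chainList R n x).Chain' (fun u v => hd u = tl v) := by
  induction n generalizing x with
  | zero => exact List.IsChain.singleton _
  | succ n ih =>
      show List.Chain' _ (x :: _)
      cases hF : Ffun R x with
      | none => exact List.IsChain.singleton _
      | some z =>
          unfold List.Chain'; rw [List.isChain_cons]
          refine ⟨?_, ih z⟩
          intro y hy
          rw [chainList_head?] at hy
          cases hy
          exact hsub _ _ (Ffun_some R hF)

lemma nodup_chainList (hnc : ∀ x : A, ¬ TransGen R x x) (n : ℕ) (x : A) :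
    (chainList R n x).Nodup := by
  induction n generalizing x with
  | zero => simp [chainList]
  | succ n ih =>
      show List.Nodup (x :: _)
      cases hF : Ffun R x with
      | none => simp
      | some z =>
          rw [List.nodup_cons]
          refine ⟨?_, ih z⟩
          intro hmem
          obtain ⟨k, hk, hit⟩ := (mem_chainList R n z x).mp hmem
          have : iterF R (k + 1) x = some x := by
            rw [show iterF R (k+1) x = (Ffun R x).bind (iterF R k) from rfl, hF]
            exact hit
          exact hnc x (iterF_transGen R (by omega) this)

end Aux3

section Aux4

open Relation

variable {V A : Type} (R : A → A → Prop)

lemma root_reached [Fintype A] (hnc : ∀ x : A, ¬ TransGen R x x) (x : A) :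
    ¬ ∃ d, R d ((pfun R)^[Fintype.card A] x) := by
  set N := Fintype.card A with hN
  intro hroot
  have hall : ∀ k ≤ N, ∃ d, R d ((pfun R)^[k] x) := by
    intro k hk
    by_contra hno
    have heq : (pfun R)^[N] x = (pfun R)^[k] x := by
      rw [show N = (N - k) + k from by omega, Function.iterate_add_apply,
        pfun_root_iter R hno]
    rw [heq] at hroot
    exact hno hroot
  have hstep : ∀ k < N, R ((pfun R)^[k + 1] x) ((pfun R)^[k] x) := by
    intro k hk
    rw [Function.iterate_succ_apply']
    exact pfun_spec' R (hall k (by omega))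
  have hchain : ∀ j ≤ N, ∀ i < j, TransGen R ((pfun R)^[j] x) ((pfun R)^[i] x) := by
    intro j
    induction j with
    | zero => omega
    | succ j ihj =>
        intro hj i hij
        rcases Nat.lt_succ_iff_lt_or_eq.mp hij with h | h
        · exact (ihj (by omega) i h).head (hstep j (by omega))
        · subst h; exact TransGen.single (hstep i (by omega))
  have hinj : Function.Injective (fun j : Fin (N + 1) => (pfun R)^[j.1] x) := by
    intro i j hij
    simp only at hij
    by_contra hne
    rcases lt_or_gt_of_ne (fun h' : i = j => hne h') with h' | h'
    · exact hnc _ (hij ▸ hchain j.1 (by omega) i.1 h')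
    · exact hnc _ (hij ▸ hchain i.1 (by omega) j.1 h')
  have := Fintype.card_le_of_injective _ hinj
  simp [hN] at this

lemma comparable (hu : ∀ b d d' : A, R b d → R b d' → d = d') {s a b : A}
    (h1 : ReflTransGen R s a) (h2 : ReflTransGen R s b) :
    ReflTransGen R a b ∨ ReflTransGen R b a := by
  revert h2
  induction h1 using ReflTransGen.head_induction_on with
  | refl => intro h2; exact Or.inl h2
  | @head s' y hstep htail ih =>
      intro h2
      rcases h2.cases_head with rfl | ⟨z, hz, hzb⟩
      · exact Or.inr (ReflTransGen.head hstep htail)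
      · have hzy : z = y := hu s' z y hz hstep
        subst hzy
        exact ih hzb

end Aux4

section Aux5

open Relation

variable {V A : Type} (R : A → A → Prop) [Fintype A]

noncomputable def cfun : A → A := fun x => (pfun R)^[Fintype.card A] x

lemma cfun_root (hnc : ∀ x : A, ¬ TransGen R x x) (x : A) : ¬ ∃ d, R d (cfun R x) :=
  root_reached R hnc x

lemma cfun_fix (hnc : ∀ x : A, ¬ TransGen R x x) (x : A) : cfun R (cfun R x) = cfun R x :=
  pfun_root_iter R (cfun_root R hnc x) _

lemma cfun_pfun (hnc : ∀ x : A, ¬ TransGen R x x) (x : A) :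
    cfun R (pfun R x) = cfun R x := by
  show (pfun R)^[Fintype.card A] (pfun R x) = (pfun R)^[Fintype.card A] x
  rw [← Function.iterate_succ_apply, Function.iterate_succ_apply']
  exact pfun_root R (cfun_root R hnc x)

lemma cfun_R (hnc : ∀ x : A, ¬ TransGen R x x)
    (hupred : ∀ b d d' : A, R d b → R d' b → d = d') {d b : A} (h : R d b) :
    cfun R b = cfun R d := by
  have hp : pfun R b = d := pfun_eq R hupred h
  rw [← hp, cfun_pfun R hnc]

lemma reach_cfun (hnc : ∀ x : A, ¬ TransGen R x x) (x : A) :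
    ReflTransGen R (cfun R x) x := by
  suffices h : ∀ k, ReflTransGen R ((pfun R)^[k] x) x from h _
  intro k
  induction k with
  | zero => exact ReflTransGen.refl
  | succ k ih =>
      rw [Function.iterate_succ_apply']
      by_cases h : ∃ d, R d ((pfun R)^[k] x)
      · exact ReflTransGen.head (pfun_spec' R h) ih
      · rw [pfun_root R h]; exact ih

lemma cfun_const (hnc : ∀ x : A, ¬ TransGen R x x)
    (hupred : ∀ b d d' : A, R d b → R d' b → d = d') {s x : A}
    (h : ReflTransGen R s x) : cfun R x = cfun R s := by
  induction h with
  | refl => rfl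
  | tail hxb hbc ih => exact (cfun_R R hnc hupred hbc).trans ih

end Aux5

theorem gentle_relations_admit_coloring'
    {V A : Type} [Fintype V] [Fintype A] (tl hd : A → V)
    (hacyc : ¬ ∃ l : List A, l ≠ [] ∧ l.Chain' (fun a b => hd a = tl b) ∧
      ∃ a₀ aL : A, l.head? = some a₀ ∧ l.getLast? = some aL ∧ hd aL = tl a₀)
    (R : A → A → Prop)
    (hR : ∀ a b : A, R a b → hd a = tl b)
    (hiii₁ : ∀ b a a' : A, tl a = hd b → tl a' = hd b → R b a → R b a' → a = a')
    (hiii₂ : ∀ b d d' : A, hd d = tl b → hd d' = tl b → R d b → R d' b → d = d') :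
    ∃ (S : Type) (_ : Fintype S) (c : A → S),
      (∀ s : S, ∃ l : List A, l.Nodup ∧ (∀ a : A, a ∈ l ↔ c a = s) ∧
        l.Chain' (fun a b => hd a = tl b)) ∧
      ∀ a b : A, R a b ↔ (hd a = tl b ∧ c a = c b) := by
  classical
  have hupred : ∀ b d d' : A, R d b → R d' b → d = d' := fun b d d' h1 h2 =>
    hiii₂ b d d' (hR d b h1) (hR d' b h2) h1 h2
  have husucc : ∀ b d d' : A, R b d → R b d' → d = d' := fun b d d' h1 h2 =>
    hiii₁ b d d' (hR b d h1).symm (hR b d' h2).symm h1 h2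
  have hnc : ∀ x : A, ¬ Relation.TransGen R x x := noCycR R tl hd hacyc hR
  refine ⟨A, inferInstance, cfun R, ?_, ?_⟩
  · intro s
    by_cases hs : cfun R s = s
    · refine ⟨chainList R (Fintype.card A) s, nodup_chainList R hnc _ s, ?_,
        chain'_chainList R tl hd hR _ s⟩
      intro a
      rw [mem_chainList]
      constructor
      · rintro ⟨k, hk, hit⟩
        rw [cfun_const R hnc hupred (iterF_reach R hit), hs]
      · intro ha
        have hr : Relation.ReflTransGen R s a := ha ▸ reach_cfun R hnc a
        obtain ⟨k, hk⟩ := reach_iterF R husucc hr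
        exact ⟨k, le_of_lt (iterF_lt_card R hnc hk), hk⟩
    · refine ⟨[], by simp, ?_, List.IsChain.nil⟩
      intro a
      simp only [List.not_mem_nil, false_iff]
      intro ha
      apply hs
      rw [← ha, cfun_fix R hnc]
  · intro a b
    constructor
    · intro h
      exact ⟨hR a b h, (cfun_R R hnc hupred h).symm⟩
    · rintro ⟨hhd, hcc⟩
      have h1 : Relation.ReflTransGen R (cfun R a) a := reach_cfun R hnc a
      have h2 : Relation.ReflTransGen R (cfun R a) b := hcc ▸ reach_cfun R hnc b
      rcases comparable R husucc h1 h2 with hab | hba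
      · rcases hab.cases_head with rfl | ⟨z, haz, hzb⟩
        · exact absurd ⟨[a], by simp, List.IsChain.singleton _, a, a, rfl, rfl, hhd⟩ hacyc
        · by_cases hzb' : z = b
          · subst hzb'; exact haz
          · rcases hzb.cases_head with rfl | ⟨w, hzw, hwb⟩
            · exact absurd rfl hzb'
            · have htg : Relation.TransGen R z b := Relation.TransGen.head' hzw hwb
              obtain ⟨l, aL, hne, hch, hhd', hlast, hstep⟩ :=
                transGen_list tl hd (Relation.TransGen.mono hR _ _ htg)
              exact absurd ⟨l, hne, hch, z, aL, hhd', hlast,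
                hstep.trans (hhd.symm.trans (hR a z haz))⟩ hacyc
      · rcases hba.cases_head with rfl | ⟨z, hbz, hza⟩
        · exact absurd ⟨[b], by simp, List.IsChain.singleton _, b, b, rfl, rfl, hhd⟩ hacyc
        · have htg : Relation.TransGen R b a := Relation.TransGen.head' hbz hza
          obtain ⟨l, aL, hne, hch, hhd', hlast, hstep⟩ :=
            transGen_list tl hd (Relation.TransGen.mono hR _ _ htg)
          refine absurd ⟨l ++ [a], by simp, ?_, b, a, ?_, by simp, hhd⟩ hacyc
          · unfold List.Chain'; rw [List.isChain_append]
            refine ⟨hch, List.isChain_singleton _, ?_⟩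
            intro u hu v hv
            simp at hv
            rw [hlast] at hu
            simp at hu
            subst hu; subst hv; exact hstep
          · rw [List.head?_append, hhd']; rfl

/-- Proposition 1.2: every acyclic gentle relation set comes from a
coloring. -/
theorem gentle_relations_admit_coloring
    {V A : Type} [Fintype V] [Fintype A] (tl hd : A → V)
    (hacyc : ¬ ∃ l : List A, l ≠ [] ∧ l.Chain' (fun a b => hd a = tl b) ∧
      ∃ a₀ aL : A, l.head? = some a₀ ∧ l.getLast? = some aL ∧ hd aL = tl a₀)
    (R : A → A → Prop)
    (hR : ∀ a b : A, R a b → hd a = tl b)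
    (hhead2 : ∀ (x : V) (a b d : A), hd a = x → hd b = x → hd d = x →
      a = b ∨ a = d ∨ b = d)
    (htail2 : ∀ (x : V) (a b d : A), tl a = x → tl b = x → tl d = x →
      a = b ∨ a = d ∨ b = d)
    (hii₁ : ∀ b a a' : A, tl a = hd b → tl a' = hd b → ¬ R b a → ¬ R b a' → a = a')
    (hii₂ : ∀ b d d' : A, hd d = tl b → hd d' = tl b → ¬ R d b → ¬ R d' b → d = d')
    (hiii₁ : ∀ b a a' : A, tl a = hd b → tl a' = hd b → R b a → R b a' → a = a')
    (hiii₂ : ∀ b d d' : A, hd d = tl b → hd d' = tl b → R d b → R d' b → d = d') :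
    ∃ (S : Type) (_ : Fintype S) (c : A → S), IsColoring tl hd c ∧
      ∀ a b : A, R a b ↔ (hd a = tl b ∧ c a = c b) := by
  obtain ⟨S, fS, c, hcol, hiff⟩ :=
    gentle_relations_admit_coloring' tl hd hacyc R hR hiii₁ hiii₂
  exact ⟨S, fS, c, hcol, hiff⟩
end

section
/- Let (Q, c) be a colored gentle quiver, β a dimension vector, r a rank map for β, ε a sign function on (Q, c), and Γ = Γ_{Q,c}(β, r, ε) the associated up-and-down graph. If a vertex of Γ is contained in two distinct edges e and e′, then c(w(e)) ≠ c(w(e′)), i.e. the labels of the two edges have different colors. -/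
/-- Proposition 2.4(a): if a vertex of the up-and-down graph is
contained in two distinct edges, their labels have different colors. -/
theorem updown_two_edges_different_colors
    {V A S : Type} [Fintype V] [Fintype A] [Fintype S]
    (tl hd : A → V) (c : A → S) (β : V → ℕ) (r : A → ℕ) (ε : V → S → ℤ)
    (hg : ColoredGentle tl hd c) (hr : IsRankMap tl hd c β r)
    (hε : IsSignFun tl hd c ε)
    (x : V) (j : ℕ) (hj1 : 1 ≤ j) (hj2 : j ≤ β x)
    (a a' : A) (i i' : ℕ)
    (h1 : InEdge tl hd β c ε r a i x j) (h2 : InEdge tl hd β c ε r a' i' x j)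
    (hne : (a, i) ≠ (a', i')) :
    c a ≠ c a' := by
  intro hcc
  obtain ⟨hcol, _, hTl, hHd⟩ := hg
  obtain ⟨hi1, hi2, hc1⟩ := h1
  obtain ⟨hi1', hi2', hc2⟩ := h2
  have hra := hr.1 a
  have hra' := hr.1 a'
  rcases hc1 with ⟨hx, hjv⟩ | ⟨hx, hjv⟩ <;> rcases hc2 with ⟨hx', hjv'⟩ | ⟨hx', hjv'⟩
  · -- both tails
    have haa : a = a' := hTl x (c a) a a' hx.symm hx'.symm rfl hcc.symm
    subst haa
    apply hne
    have : i = i' := by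
      simp only [srcIdx] at hjv hjv'
      split at hjv <;> split at hjv' <;> omega
    rw [this]
  · -- tail of a, head of a'
    have hchain : hd a' = tl a := by rw [← hx']; exact hx
    have hsum : r a + r a' ≤ β (hd a') := hr.2 a' a hchain hcc.symm
    have hsign := hε.1 x (c a) ⟨a, rfl, Or.inl hx.symm⟩
    simp only [srcIdx] at hjv
    simp only [tgtIdx] at hjv'
    rw [← hx] at hjv
    rw [← hx', ← hcc] at hjv'
    rw [← hx] at hra
    rw [← hx'] at hra' hsum
    rcases hsign with h | h <;> simp only [h] at hjv hjv' <;> norm_num at hjv hjv' <;> omega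
  · -- head of a, tail of a'
    have hchain : hd a = tl a' := by rw [← hx']; exact hx.symm
    have hsum : r a' + r a ≤ β (hd a) := hr.2 a a' hchain hcc
    have hsign := hε.1 x (c a) ⟨a, rfl, Or.inr hx.symm⟩
    simp only [tgtIdx] at hjv
    simp only [srcIdx] at hjv'
    rw [← hx] at hjv
    rw [← hx', ← hcc] at hjv'
    rw [← hx] at hra hsum
    rw [← hx'] at hra'
    rcases hsign with h | h <;> simp only [h] at hjv hjv' <;> norm_num at hjv hjv' <;> omega
  · -- both heads
    have haa : a = a' := hHd x (c a) a a' hx.symm hx'.symm rfl hcc.symm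
    subst haa
    apply hne
    have : i = i' := by
      simp only [tgtIdx] at hjv hjv'
      split at hjv <;> split at hjv' <;> omega
    rw [this]
end

section
/- Let (Q, c) be a colored gentle quiver, β a dimension vector, r a rank map for β, ε a sign function on (Q, c), and Γ = Γ_{Q,c}(β, r, ε) the associated up-and-down graph. Then every vertex of Γ is contained in at most two edges of Γ. -/
/-- Two edges of the same color through the same vertex of the up-and-down graph
coincide. -/
lemma updown_same_color_eq
    {V A S : Type}
    (tl hd : A → V) (c : A → S) (β : V → ℕ) (r : A → ℕ) (ε : V → S → ℤ)
    (hg : ColoredGentle tl hd c) (hr : IsRankMap tl hd c β r)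
    (hε : IsSignFun tl hd c ε)
    (x : V) (j : ℕ) (a b : A) (i k : ℕ)
    (h1 : InEdge tl hd β c ε r a i x j) (h2 : InEdge tl hd β c ε r b k x j)
    (hc : c a = c b) : a = b ∧ i = k := by
  obtain ⟨hi1, hi2, hcase1⟩ := h1
  obtain ⟨hk1, hk2, hcase2⟩ := h2
  have hra := hr.1 a
  have hrb := hr.1 b
  rcases hcase1 with ⟨hx1, hj1⟩ | ⟨hx1, hj1⟩ <;>
    rcases hcase2 with ⟨hx2, hj2⟩ | ⟨hx2, hj2⟩
  · -- both tail endpoints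
    have hab : a = b := hg.2.2.1 x (c a) a b hx1.symm hx2.symm rfl hc.symm
    subst hab
    refine ⟨rfl, ?_⟩
    unfold srcIdx at hj1 hj2
    have hbd : r a ≤ β (tl a) := le_trans hra (min_le_left _ _)
    split_ifs at hj1 hj2 <;> omega
  · -- a tail, b head : contradiction
    exfalso
    have hεs : ε x (c a) = 1 ∨ ε x (c a) = -1 :=
      hε.1 x (c a) ⟨a, rfl, Or.inl hx1.symm⟩
    have hht : hd b = tl a := by rw [← hx1, ← hx2]
    have hrk : r a + r b ≤ β (hd b) := hr.2 b a hht hc.symm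
    rw [← hx2] at hrk
    unfold srcIdx at hj1
    unfold tgtIdx at hj2
    rw [← hx1] at hj1
    rw [← hx2, ← hc] at hj2
    rcases hεs with hv | hv <;> rw [hv] at hj1 hj2 <;> norm_num at hj1 hj2 <;> omega
  · -- a head, b tail : contradiction
    exfalso
    have hεs : ε x (c a) = 1 ∨ ε x (c a) = -1 :=
      hε.1 x (c a) ⟨a, rfl, Or.inr hx1.symm⟩
    have hht : hd a = tl b := by rw [← hx1, ← hx2]
    have hrk : r b + r a ≤ β (hd a) := hr.2 a b hht hc
    rw [← hx1] at hrk
    unfold tgtIdx at hj1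
    unfold srcIdx at hj2
    rw [← hx1] at hj1
    rw [← hx2, ← hc] at hj2
    rcases hεs with hv | hv <;> rw [hv] at hj1 hj2 <;> norm_num at hj1 hj2 <;> omega
  · -- both head endpoints
    have hab : a = b := hg.2.2.2 x (c a) a b hx1.symm hx2.symm rfl hc.symm
    subst hab
    refine ⟨rfl, ?_⟩
    unfold tgtIdx at hj1 hj2
    have hbd : r a ≤ β (hd a) := le_trans hra (min_le_right _ _)
    split_ifs at hj1 hj2 <;> omega

/-- Proposition 2.4(b): every vertex of the up-and-down graph is
contained in at most two edges. -/
theorem updown_at_most_two_edges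
    {V A S : Type} [Fintype V] [Fintype A] [Fintype S]
    (tl hd : A → V) (c : A → S) (β : V → ℕ) (r : A → ℕ) (ε : V → S → ℤ)
    (hg : ColoredGentle tl hd c) (hr : IsRankMap tl hd c β r)
    (hε : IsSignFun tl hd c ε)
    (x : V) (j : ℕ) (hj1 : 1 ≤ j) (hj2 : j ≤ β x)
    (p₁ p₂ p₃ : A × ℕ)
    (h1 : InEdge tl hd β c ε r p₁.1 p₁.2 x j)
    (h2 : InEdge tl hd β c ε r p₂.1 p₂.2 x j)
    (h3 : InEdge tl hd β c ε r p₃.1 p₃.2 x j) :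
    p₁ = p₂ ∨ p₁ = p₃ ∨ p₂ = p₃ := by
  have inc : ∀ p : A × ℕ, InEdge tl hd β c ε r p.1 p.2 x j →
      Incident tl hd c x (c p.1) := by
    rintro p ⟨-, -, ⟨hx, -⟩ | ⟨hx, -⟩⟩
    · exact ⟨p.1, rfl, Or.inl hx.symm⟩
    · exact ⟨p.1, rfl, Or.inr hx.symm⟩
  have key : ∀ p q : A × ℕ, InEdge tl hd β c ε r p.1 p.2 x j →
      InEdge tl hd β c ε r q.1 q.2 x j → c p.1 = c q.1 → p = q := by
    intro p q hp hq hcc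
    obtain ⟨h₁, h₂⟩ := updown_same_color_eq tl hd c β r ε hg hr hε x j
      p.1 q.1 p.2 q.2 hp hq hcc
    exact Prod.ext h₁ h₂
  rcases hg.2.1 x (c p₁.1) (c p₂.1) (c p₃.1) (inc p₁ h1) (inc p₂ h2) (inc p₃ h3)
    with hc | hc | hc
  · exact Or.inl (key p₁ p₂ h1 h2 hc)
  · exact Or.inr (Or.inl (key p₁ p₃ h1 h3 hc))
  · exact Or.inr (Or.inr (key p₂ p₃ h2 h3 hc))
end

section
/- Let (Q, c) be a colored gentle quiver, β a dimension vector, r a rank map for β, ε a sign function on (Q, c), and Γ = Γ_{Q,c}(β, r, ε) the associated up-and-down graph. Let γ be a connected component of Γ. Define β′(x) = #{i : vᵢˣ ∈ γ} for each vertex x ∈ Q₀ and r′(a) = #{i : e(a, i) ∈ γ} for each arrow a ∈ Q₁, and for each x let γ₁(x) < γ₂(x) < ⋯ < γ_{β′(x)}(x) be the increasing enumeration of {i : vᵢˣ ∈ γ}. Then the map f sending the vertex wᵢˣ of Γ_{Q,c}(β′, r′, ε) to the vertex v_{γᵢ(x)}ˣ of Γ is a bijection from the vertex set of Γ_{Q,c}(β′,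 r′, ε) onto the vertex set of γ such that, for every arrow a, two vertices of Γ_{Q,c}(β′, r′, ε) are joined by an edge labeled a if and only if their images under f are joined by an edge labeled a in γ. -/
private lemma ncardIcc (a b : ℕ) : (Set.Icc a b).ncard = b + 1 - a := by
  rw [← Finset.coe_Icc, Set.ncard_coe_finset, Nat.card_Icc]

private lemma monoEnum_unique (k : ℕ) (f h : ℕ → ℕ) (D : Set ℕ)
    (hf : StrictMonoOn f (Set.Icc 1 k)) (hh : StrictMonoOn h (Set.Icc 1 k))
    (hfb : Set.BijOn f (Set.Icc 1 k) D) (hhb : Set.BijOn h (Set.Icc 1 k) D) :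
    ∀ i ∈ Set.Icc 1 k, f i = h i := by
  intro i
  induction i using Nat.strong_induction_on with
  | _ i IH =>
    intro hi
    obtain ⟨j, hj, hje⟩ := hhb.surjOn (hfb.mapsTo hi)
    rcases lt_trichotomy j i with hlt | heq | hgt
    · exfalso
      have e1 : f j = h j := IH j hlt hj
      have e2 : f j = f i := by rw [e1, hje]
      have := hfb.injOn hj hi e2
      omega
    · rw [← heq] at hje ⊢; exact hje.symm
    · obtain ⟨j₂, hj₂, hj₂e⟩ := hfb.surjOn (hhb.mapsTo hi)
      rcases lt_trichotomy j₂ i with hlt2 | heq2 | hgt2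
      · exfalso
        have e1 : f j₂ = h j₂ := IH j₂ hlt2 hj₂
        have e2 : h j₂ = h i := by rw [← e1, hj₂e]
        have := hhb.injOn hj₂ hi e2
        omega
      · rw [← heq2] at hj₂e ⊢; exact hj₂e
      · exfalso
        have l1 : h i < h j := hh hi hj hgt
        have l2 : f i < f j₂ := hf hi hj₂ hgt2
        omega

private lemma bijOn_rev (k : ℕ) :
    Set.BijOn (fun i => k + 1 - i) (Set.Icc 1 k) (Set.Icc 1 k) := by
  refine ⟨?_, ?_, ?_⟩
  · intro i hi; simp only [Set.mem_Icc] at *; omega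
  · intro i hi j hj hij; simp only [Set.mem_Icc] at *; omega
  · intro j hj
    simp only [Set.mem_Icc] at hj
    exact ⟨k + 1 - j, by simp only [Set.mem_Icc]; omega,
      by show k + 1 - (k + 1 - j) = j; omega⟩

private lemma antiEnum_unique (k : ℕ) (f h : ℕ → ℕ) (D : Set ℕ)
    (hf : StrictAntiOn f (Set.Icc 1 k)) (hh : StrictAntiOn h (Set.Icc 1 k))
    (hfb : Set.BijOn f (Set.Icc 1 k) D) (hhb : Set.BijOn h (Set.Icc 1 k) D) :
    ∀ i ∈ Set.Icc 1 k, f i = h i := by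
  have hrev := bijOn_rev k
  have mono : ∀ f' : ℕ → ℕ, StrictAntiOn f' (Set.Icc 1 k) →
      StrictMonoOn (fun i => f' (k + 1 - i)) (Set.Icc 1 k) := by
    intro f' hf' i hi j hj hij
    have hi' := hrev.mapsTo hi
    have hj' := hrev.mapsTo hj
    simp only [Set.mem_Icc] at hi hj
    exact hf' hj' hi' (by omega)
  have key := monoEnum_unique k _ _ D (mono f hf) (mono h hh)
    (hfb.comp hrev) (hhb.comp hrev)
  intro i hi
  have hi' := hrev.mapsTo hi
  have e := key _ hi'
  simp only [Set.mem_Icc] at hi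
  simpa [show k + 1 - (k + 1 - i) = i by omega] using e

private lemma downClosed_eq_Icc (E : Set ℕ) (n : ℕ) (hE : E ⊆ Set.Icc 1 n)
    (hdc : ∀ j ∈ E, ∀ i, 1 ≤ i → i ≤ j → i ∈ E) : E = Set.Icc 1 E.ncard := by
  have hfin : E.Finite := (Set.finite_Icc 1 n).subset hE
  rcases E.eq_empty_or_nonempty with he | he
  · rw [he, Set.ncard_empty]
    symm; apply Set.Icc_eq_empty; omega
  · have hne : hfin.toFinset.Nonempty := by
      rwa [Set.Finite.toFinset_nonempty]
    set m := hfin.toFinset.max' hne with hm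
    have hmE : m ∈ E := by
      have := hfin.toFinset.max'_mem hne
      rwa [Set.Finite.mem_toFinset] at this
    have hEeq : E = Set.Icc 1 m := by
      ext i
      simp only [Set.mem_Icc]
      constructor
      · intro hiE
        have h1 := hE hiE
        simp only [Set.mem_Icc] at h1
        exact ⟨h1.1, hfin.toFinset.le_max' i (by rwa [Set.Finite.mem_toFinset])⟩
      · rintro ⟨h1, h2⟩; exact hdc m hmE i h1 h2
    rw [hEeq, ncardIcc]
    have h : m + 1 - 1 = m := by omega
    rw [h]

private lemma upClosed_eq_Icc (E : Set ℕ) (n : ℕ) (hE : E ⊆ Set.Icc 1 n)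
    (huc : ∀ j ∈ E, ∀ i, i ≤ n → j ≤ i → i ∈ E) :
    E = Set.Icc (n + 1 - E.ncard) n := by
  have hfin : E.Finite := (Set.finite_Icc 1 n).subset hE
  rcases E.eq_empty_or_nonempty with he | he
  · rw [he, Set.ncard_empty]
    symm; apply Set.Icc_eq_empty; omega
  · have hne : hfin.toFinset.Nonempty := by
      rwa [Set.Finite.toFinset_nonempty]
    set m := hfin.toFinset.min' hne with hm
    have hmE : m ∈ E := by
      have := hfin.toFinset.min'_mem hne
      rwa [Set.Finite.mem_toFinset] at this
    have hmn : 1 ≤ m ∧ m ≤ n := by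
      have := hE hmE; simpa using this
    have hEeq : E = Set.Icc m n := by
      ext i
      simp only [Set.mem_Icc]
      constructor
      · intro hiE
        have h1 := hE hiE
        simp only [Set.mem_Icc] at h1
        exact ⟨hfin.toFinset.min'_le i (by rwa [Set.Finite.mem_toFinset]), h1.2⟩
      · rintro ⟨h1, h2⟩; exact huc m hmE i h2 h1
    rw [hEeq, ncardIcc]
    have h : n + 1 - (n + 1 - m) = m := by omega
    rw [h]

private lemma enum_init (C : Set ℕ) (n : ℕ) (hCfin : C.Finite) (hn : n = C.ncard)
    (g : ℕ → ℕ) (hmono : StrictMonoOn g (Set.Icc 1 n))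
    (hbij : Set.BijOn g (Set.Icc 1 n) C)
    (D : Set ℕ) (hD : D ⊆ C) (hdc : ∀ c ∈ C, ∀ d ∈ D, c ≤ d → c ∈ D)
    (k : ℕ) (hk : k = D.ncard) : Set.BijOn g (Set.Icc 1 k) D := by
  set E := Set.Icc 1 n ∩ g ⁻¹' D with hEdef
  have hEsub : E ⊆ Set.Icc 1 n := Set.inter_subset_left
  have himg : g '' E = D := by
    apply Set.Subset.antisymm
    · rintro _ ⟨i, ⟨hi1, hi2⟩, rfl⟩; exact hi2
    · intro d hd
      obtain ⟨i, hi, rfl⟩ := hbij.surjOn (hD hd)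
      exact ⟨i, ⟨hi, hd⟩, rfl⟩
  have hinjE : Set.InjOn g E := hbij.injOn.mono hEsub
  have hcard : E.ncard = k := by
    rw [hk, ← himg, Set.ncard_image_of_injOn hinjE]
  have hdcE : ∀ j ∈ E, ∀ i, 1 ≤ i → i ≤ j → i ∈ E := by
    intro j hj i h1 h2
    have hjI := hEsub hj
    simp only [Set.mem_Icc] at hjI
    have hiI : i ∈ Set.Icc 1 n := by simp only [Set.mem_Icc]; omega
    refine ⟨hiI, ?_⟩
    have hle : g i ≤ g j := by
      rcases eq_or_lt_of_le h2 with rfl | hlt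
      · exact le_refl _
      · exact (hmono hiI hjI hlt).le
    exact hdc (g i) (hbij.mapsTo hiI) (g j) hj.2 hle
  have hEeq : E = Set.Icc 1 k := by
    rw [← hcard]; exact downClosed_eq_Icc E n hEsub hdcE
  rw [← hEeq, ← himg]
  exact hinjE.bijOn_image

private lemma enum_final (C : Set ℕ) (n : ℕ) (hCfin : C.Finite) (hn : n = C.ncard)
    (g : ℕ → ℕ) (hmono : StrictMonoOn g (Set.Icc 1 n))
    (hbij : Set.BijOn g (Set.Icc 1 n) C)
    (D : Set ℕ) (hD : D ⊆ C) (huc : ∀ c ∈ C, ∀ d ∈ D, d ≤ c → c ∈ D)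
    (k : ℕ) (hk : k = D.ncard) :
    Set.BijOn (fun i => g (n + 1 - i)) (Set.Icc 1 k) D := by
  set E := Set.Icc 1 n ∩ g ⁻¹' D with hEdef
  have hEsub : E ⊆ Set.Icc 1 n := Set.inter_subset_left
  have himg : g '' E = D := by
    apply Set.Subset.antisymm
    · rintro _ ⟨i, ⟨hi1, hi2⟩, rfl⟩; exact hi2
    · intro d hd
      obtain ⟨i, hi, rfl⟩ := hbij.surjOn (hD hd)
      exact ⟨i, ⟨hi, hd⟩, rfl⟩
  have hinjE : Set.InjOn g E := hbij.injOn.mono hEsub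
  have hcard : E.ncard = k := by
    rw [hk, ← himg, Set.ncard_image_of_injOn hinjE]
  have hkn : k ≤ n := by
    rw [hk, hn]; exact Set.ncard_le_ncard hD hCfin
  have hucE : ∀ j ∈ E, ∀ i, i ≤ n → j ≤ i → i ∈ E := by
    intro j hj i h1 h2
    have hjI := hEsub hj
    simp only [Set.mem_Icc] at hjI
    have hiI : i ∈ Set.Icc 1 n := by simp only [Set.mem_Icc]; omega
    refine ⟨hiI, ?_⟩
    have hle : g j ≤ g i := by
      rcases eq_or_lt_of_le h2 with rfl | hlt
      · exact le_refl _
      · exact (hmono hjI hiI hlt).le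
    exact huc (g i) (hbij.mapsTo hiI) (g j) hj.2 hle
  have hEeq : E = Set.Icc (n + 1 - k) n := by
    rw [← hcard]; exact upClosed_eq_Icc E n hEsub hucE
  have hbijE : Set.BijOn g E D := by
    rw [← himg]; exact hinjE.bijOn_image
  have hrev : Set.BijOn (fun i => n + 1 - i) (Set.Icc 1 k) E := by
    rw [hEeq]
    refine ⟨?_, ?_, ?_⟩
    · intro i hi; simp only [Set.mem_Icc] at *; omega
    · intro i hi j hj hij; simp only [Set.mem_Icc] at *; omega
    · intro j hj
      simp only [Set.mem_Icc] at hj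
      exact ⟨n + 1 - j, by simp only [Set.mem_Icc]; omega,
        by show n + 1 - (n + 1 - j) = j; omega⟩
  exact hbijE.comp hrev


/-- Proposition 2.4(c): a connected component `γ` of an up-and-down
graph is again an up-and-down graph `Γ_{Q,c}(β', r', ε)`, via the level-preserving map
`f : wᵢˣ ↦ v_{γᵢ(x)}ˣ` given by the increasing enumerations `g x` of the component's
indices at each level. -/
theorem updown_component_is_updown
    {V A S : Type} [Fintype V] [Fintype A] [Fintype S]
    (tl hd : A → V) (c : A → S) (β : V → ℕ) (r : A → ℕ) (ε : V → S → ℤ)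
    (hg : ColoredGentle tl hd c) (hr : IsRankMap tl hd c β r)
    (hε : IsSignFun tl hd c ε)
    (p₀ : V × ℕ) (hp₀ : 1 ≤ p₀.2 ∧ p₀.2 ≤ β p₀.1)
    (γV : Set (V × ℕ))
    (hγV : γV = {q : V × ℕ | Relation.ReflTransGen (UDAdj tl hd β c ε r) p₀ q})
    (β' : V → ℕ) (hβ' : ∀ x : V, β' x = Set.ncard {i : ℕ | (x, i) ∈ γV})
    (r' : A → ℕ)
    (hr' : ∀ a : A, r' a = Set.ncard
      {i : ℕ | 1 ≤ i ∧ i ≤ r a ∧ (tl a, srcIdx tl β c ε a i) ∈ γV})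
    (g : V → ℕ → ℕ)
    (hgmono : ∀ x : V, StrictMonoOn (g x) (Set.Icc 1 (β' x)))
    (hgbij : ∀ x : V, Set.BijOn (g x) (Set.Icc 1 (β' x)) {i : ℕ | (x, i) ∈ γV}) :
    Set.BijOn (fun p : V × ℕ => (p.1, g p.1 p.2))
        {p : V × ℕ | 1 ≤ p.2 ∧ p.2 ≤ β' p.1} γV ∧
    ∀ (a : A) (p q : V × ℕ), 1 ≤ p.2 → p.2 ≤ β' p.1 → 1 ≤ q.2 → q.2 ≤ β' q.1 →
      (UDJoined tl hd β' c ε r' a p q ↔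
        (∃ i : ℕ, 1 ≤ i ∧ i ≤ r a ∧ (tl a, srcIdx tl β c ε a i) ∈ γV ∧
          (((p.1, g p.1 p.2) = (tl a, srcIdx tl β c ε a i) ∧
            (q.1, g q.1 q.2) = (hd a, tgtIdx hd β c ε a i)) ∨
           ((q.1, g q.1 q.2) = (tl a, srcIdx tl β c ε a i) ∧
            (p.1, g p.1 p.2) = (hd a, tgtIdx hd β c ε a i))))) := by
  -- γV is closed under adjacency
  have hclosed : ∀ p ∈ γV, ∀ q, UDAdj tl hd β c ε r p q → q ∈ γV := by
    intro p hp q hadj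
    rw [hγV] at hp ⊢
    exact Relation.ReflTransGen.tail hp hadj
  -- all vertices of γV are valid
  have hvalid' : ∀ (z : V) (j : ℕ), (z, j) ∈ γV → 1 ≤ j ∧ j ≤ β z := by
    have hvalid : ∀ p ∈ γV, 1 ≤ p.2 ∧ p.2 ≤ β p.1 := by
      intro p hp
      rw [hγV] at hp
      induction hp with
      | refl => exact hp₀
      | tail _ hadj ih =>
        simp only [UDAdj, UDJoined] at hadj
        obtain ⟨a, i, h1, h2, h3⟩ := hadj
        have hra := le_min_iff.mp (hr.1 a)
        rcases h3 with ⟨-, hq⟩ | ⟨hq, -⟩ <;> subst hq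
        · dsimp only
          unfold tgtIdx
          constructor <;> (split <;> omega)
        · dsimp only
          unfold srcIdx
          constructor <;> (split <;> omega)
    intro z j h
    exact hvalid (z, j) h
  have hL1 : ∀ (a : A) (i : ℕ), 1 ≤ i → i ≤ r a →
      ((tl a, srcIdx tl β c ε a i) ∈ γV ↔ (hd a, tgtIdx hd β c ε a i) ∈ γV) := by
    intro a i h1 h2
    constructor
    · intro h
      refine hclosed _ h _ ?_
      exact ⟨a, i, h1, h2, Or.inl ⟨rfl, rfl⟩⟩
    · intro h
      refine hclosed _ h _ ?_
      exact ⟨a, i, h1, h2, Or.inr ⟨rfl, rfl⟩⟩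
  have hCfin : ∀ z : V, Set.Finite {i : ℕ | (z, i) ∈ γV} := by
    intro z
    apply (Set.finite_Icc 1 (β z)).subset
    intro i hi
    exact Set.mem_Icc.mpr (hvalid' z i hi)
  -- Part 1 : the bijection on vertices
  have part1 : Set.BijOn (fun p : V × ℕ => (p.1, g p.1 p.2))
      {p : V × ℕ | 1 ≤ p.2 ∧ p.2 ≤ β' p.1} γV := by
    refine ⟨?_, ?_, ?_⟩
    · rintro ⟨x, i⟩ ⟨h1, h2⟩
      exact (hgbij x).mapsTo (Set.mem_Icc.mpr ⟨h1, h2⟩)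
    · rintro ⟨x, i⟩ ⟨hx1, hx2⟩ ⟨y, j⟩ ⟨hy1, hy2⟩ heq
      simp only [Prod.mk.injEq] at heq
      obtain ⟨rfl, h2⟩ := heq
      have := (hgbij x).injOn (Set.mem_Icc.mpr ⟨hx1, hx2⟩) (Set.mem_Icc.mpr ⟨hy1, hy2⟩) h2
      exact Prod.ext rfl this
    · rintro ⟨x, j⟩ hq
      obtain ⟨i, hi, hgi⟩ := (hgbij x).surjOn hq
      have hi' := Set.mem_Icc.mp hi
      exact ⟨(x, i), ⟨hi'.1, hi'.2⟩, Prod.ext rfl hgi⟩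
  -- the key combinatorial correspondence, one arrow at a time
  have KEY : ∀ a : A,
      (r' a ≤ β' (tl a) ∧ r' a ≤ β' (hd a)) ∧
      ∃ φ : ℕ → ℕ,
        Set.BijOn φ (Set.Icc 1 (r' a))
          {i : ℕ | 1 ≤ i ∧ i ≤ r a ∧ (tl a, srcIdx tl β c ε a i) ∈ γV} ∧
        ∀ i' ∈ Set.Icc 1 (r' a),
          g (tl a) (srcIdx tl β' c ε a i') = srcIdx tl β c ε a (φ i') ∧
          g (hd a) (tgtIdx hd β' c ε a i') = tgtIdx hd β c ε a (φ i') := by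
    intro a
    have hra := le_min_iff.mp (hr.1 a)
    set T : Set ℕ :=
      {i : ℕ | 1 ≤ i ∧ i ≤ r a ∧ (tl a, srcIdx tl β c ε a i) ∈ γV} with hTdef
    have hkT : r' a = T.ncard := hr' a
    -- source side
    obtain ⟨φ, φbij, φmono, φsrc, hkbx⟩ :
        ∃ φ : ℕ → ℕ, Set.BijOn φ (Set.Icc 1 (r' a)) T ∧
          StrictMonoOn φ (Set.Icc 1 (r' a)) ∧
          (∀ i' ∈ Set.Icc 1 (r' a),
            g (tl a) (srcIdx tl β' c ε a i') = srcIdx tl β c ε a (φ i')) ∧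
          r' a ≤ β' (tl a) := by
      by_cases hx : ε (tl a) (c a) = 1
      · have hs : ∀ (b : V → ℕ) (i : ℕ), srcIdx tl b c ε a i = i := by
          intro b i; simp [srcIdx, hx]
        have hTsub : T ⊆ {i : ℕ | (tl a, i) ∈ γV} := by
          intro i hi
          have h3 := hi.2.2
          rwa [hs] at h3
        have hdc : ∀ c' ∈ {i : ℕ | (tl a, i) ∈ γV}, ∀ d ∈ T, c' ≤ d → c' ∈ T := by
          intro c' hc' d hd hle
          have h1 := (hvalid' (tl a) c' hc').1
          refine ⟨h1, le_trans hle hd.2.1, ?_⟩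
          rwa [hs]
        have hbijT := enum_init _ _ (hCfin (tl a)) (hβ' (tl a)) _ (hgmono (tl a))
          (hgbij (tl a)) T hTsub hdc _ hkT
        have hkb : r' a ≤ β' (tl a) := by
          rw [hkT, hβ' (tl a)]
          exact Set.ncard_le_ncard hTsub (hCfin (tl a))
        refine ⟨g (tl a), hbijT,
          (hgmono (tl a)).mono (Set.Icc_subset_Icc le_rfl hkb), ?_, hkb⟩
        intro i' hi'
        rw [hs, hs]
      · have hs : ∀ (b : V → ℕ) (i : ℕ), srcIdx tl b c ε a i = b (tl a) - i + 1 := by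
          intro b i; simp [srcIdx, hx]
        set Ssrc : Set ℕ :=
          {j : ℕ | (tl a, j) ∈ γV ∧ β (tl a) + 1 - r a ≤ j} with hSdef
        have hSsub : Ssrc ⊆ {i : ℕ | (tl a, i) ∈ γV} := fun j hj => hj.1
        have himg : (fun i => β (tl a) + 1 - i) '' T = Ssrc := by
          apply Set.Subset.antisymm
          · rintro _ ⟨i, hi, rfl⟩
            obtain ⟨h1, h2, h3⟩ := hi
            rw [hs] at h3
            have e : β (tl a) + 1 - i = β (tl a) - i + 1 := by omega
            show β (tl a) + 1 - i ∈ Ssrc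
            exact ⟨by rw [e]; exact h3, by omega⟩
          · rintro j ⟨hj1, hj2⟩
            have hjb := hvalid' (tl a) j hj1
            refine ⟨β (tl a) + 1 - j, ⟨by omega, by omega, ?_⟩,
              by show β (tl a) + 1 - (β (tl a) + 1 - j) = j; omega⟩
            rw [hs]
            have e : β (tl a) - (β (tl a) + 1 - j) + 1 = j := by omega
            rw [e]; exact hj1
        have hinjT : Set.InjOn (fun i => β (tl a) + 1 - i) T := by
          intro i hi j hj he
          have h1 := hi.2.1
          have h2 := hj.2.1
          simp only at he
          omega
        have hkS : r' a = Ssrc.ncard := by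
          rw [hkT, ← himg, Set.ncard_image_of_injOn hinjT]
        have huc : ∀ c' ∈ {i : ℕ | (tl a, i) ∈ γV}, ∀ d ∈ Ssrc, d ≤ c' → c' ∈ Ssrc := by
          intro c' hc' d hd hle
          exact ⟨hc', le_trans hd.2 hle⟩
        have hbijS := enum_final _ _ (hCfin (tl a)) (hβ' (tl a)) _ (hgmono (tl a))
          (hgbij (tl a)) Ssrc hSsub huc _ hkS
        have hkb : r' a ≤ β' (tl a) := by
          rw [hkS, hβ' (tl a)]
          exact Set.ncard_le_ncard hSsub (hCfin (tl a))
        have hback : Set.BijOn (fun j => β (tl a) + 1 - j) Ssrc T := by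
          refine ⟨?_, ?_, ?_⟩
          · rintro j ⟨hj1, hj2⟩
            have hjb := hvalid' (tl a) j hj1
            show β (tl a) + 1 - j ∈ T
            refine ⟨by omega, by omega, ?_⟩
            rw [hs]
            have e : β (tl a) - (β (tl a) + 1 - j) + 1 = j := by omega
            rw [e]; exact hj1
          · rintro j ⟨hj1, hj2⟩ j' ⟨hj1', hj2'⟩ he
            have hjb := hvalid' (tl a) j hj1
            have hjb' := hvalid' (tl a) j' hj1'
            simp only at he
            omega
          · intro i hi
            obtain ⟨h1, h2, h3⟩ := hi
            rw [hs] at h3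
            have e : β (tl a) + 1 - i = β (tl a) - i + 1 := by omega
            refine ⟨β (tl a) + 1 - i, ⟨by rw [e]; exact h3, by omega⟩,
              by show β (tl a) + 1 - (β (tl a) + 1 - i) = i; omega⟩
        refine ⟨(fun j => β (tl a) + 1 - j) ∘ (fun i' => g (tl a) (β' (tl a) + 1 - i')),
          hback.comp hbijS, ?_, ?_, hkb⟩
        · intro i' hi' j' hj' hlt
          have hi2 := Set.mem_Icc.mp hi'
          have hj2 := Set.mem_Icc.mp hj'
          have hmi : β' (tl a) + 1 - i' ∈ Set.Icc 1 (β' (tl a)) := by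
            simp only [Set.mem_Icc]; omega
          have hmj : β' (tl a) + 1 - j' ∈ Set.Icc 1 (β' (tl a)) := by
            simp only [Set.mem_Icc]; omega
          have hgm := hgmono (tl a) hmj hmi (by omega)
          have hbi := hvalid' (tl a) _ ((hgbij (tl a)).mapsTo hmi)
          have hbj := hvalid' (tl a) _ ((hgbij (tl a)).mapsTo hmj)
          show β (tl a) + 1 - g (tl a) (β' (tl a) + 1 - i')
            < β (tl a) + 1 - g (tl a) (β' (tl a) + 1 - j')
          omega
        · intro i' hi'
          have hi2 := Set.mem_Icc.mp hi'
          rw [hs, hs]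
          have hmi : β' (tl a) + 1 - i' ∈ Set.Icc 1 (β' (tl a)) := by
            simp only [Set.mem_Icc]; omega
          have hbi := hvalid' (tl a) _ ((hgbij (tl a)).mapsTo hmi)
          have e1 : β' (tl a) - i' + 1 = β' (tl a) + 1 - i' := by omega
          rw [e1]
          show g (tl a) (β' (tl a) + 1 - i')
            = β (tl a) - (β (tl a) + 1 - g (tl a) (β' (tl a) + 1 - i')) + 1
          omega
    -- target side
    have hTy : ∀ i ∈ T, (hd a, tgtIdx hd β c ε a i) ∈ γV := by
      intro i hi
      exact (hL1 a i hi.1 hi.2.1).mp hi.2.2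
    have hTy' : ∀ i : ℕ, 1 ≤ i → i ≤ r a → (hd a, tgtIdx hd β c ε a i) ∈ γV → i ∈ T := by
      intro i h1 h2 h3
      exact ⟨h1, h2, (hL1 a i h1 h2).mpr h3⟩
    obtain ⟨φtgt, hkby⟩ :
        (∀ i' ∈ Set.Icc 1 (r' a),
          g (hd a) (tgtIdx hd β' c ε a i') = tgtIdx hd β c ε a (φ i')) ∧
        r' a ≤ β' (hd a) := by
      by_cases hy : ε (hd a) (c a) = -1
      · have ht : ∀ (b : V → ℕ) (i : ℕ), tgtIdx hd b c ε a i = i := by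
          intro b i; simp [tgtIdx, hy]
        have hTsubY : T ⊆ {i : ℕ | (hd a, i) ∈ γV} := by
          intro i hi
          have h3 := hTy i hi
          rwa [ht] at h3
        have hdc : ∀ c' ∈ {i : ℕ | (hd a, i) ∈ γV}, ∀ d ∈ T, c' ≤ d → c' ∈ T := by
          intro c' hc' d hd' hle
          have h1 := (hvalid' (hd a) c' hc').1
          refine hTy' c' h1 (le_trans hle hd'.2.1) ?_
          rwa [ht]
        have hbijY := enum_init _ _ (hCfin (hd a)) (hβ' (hd a)) _ (hgmono (hd a))
          (hgbij (hd a)) T hTsubY hdc _ hkT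
        have hkby : r' a ≤ β' (hd a) := by
          rw [hkT, hβ' (hd a)]
          exact Set.ncard_le_ncard hTsubY (hCfin (hd a))
        have huniq := monoEnum_unique (r' a) φ (g (hd a)) T φmono
          ((hgmono (hd a)).mono (Set.Icc_subset_Icc le_rfl hkby)) φbij hbijY
        refine ⟨?_, hkby⟩
        intro i' hi'
        rw [ht, ht]
        exact (huniq i' hi').symm
      · have ht : ∀ (b : V → ℕ) (i : ℕ), tgtIdx hd b c ε a i = b (hd a) - i + 1 := by
          intro b i; simp [tgtIdx, hy]
        set Stgt : Set ℕ :=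
          {j : ℕ | (hd a, j) ∈ γV ∧ β (hd a) + 1 - r a ≤ j} with hS2
        have hSsubY : Stgt ⊆ {i : ℕ | (hd a, i) ∈ γV} := fun j hj => hj.1
        have himgY : (fun i => β (hd a) + 1 - i) '' T = Stgt := by
          apply Set.Subset.antisymm
          · rintro _ ⟨i, hi, rfl⟩
            have h3 := hTy i hi
            rw [ht] at h3
            have e : β (hd a) + 1 - i = β (hd a) - i + 1 := by
              have := hi.1; have := hi.2.1; omega
            show β (hd a) + 1 - i ∈ Stgt
            exact ⟨by rw [e]; exact h3, by have := hi.1; have := hi.2.1; omega⟩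
          · rintro j ⟨hj1, hj2⟩
            have hjb := hvalid' (hd a) j hj1
            refine ⟨β (hd a) + 1 - j, hTy' _ (by omega) (by omega) ?_,
              by show β (hd a) + 1 - (β (hd a) + 1 - j) = j; omega⟩
            rw [ht]
            have e : β (hd a) - (β (hd a) + 1 - j) + 1 = j := by omega
            rw [e]; exact hj1
        have hinjY : Set.InjOn (fun i => β (hd a) + 1 - i) T := by
          intro i hi j hj he
          have h1 := hi.2.1
          have h2 := hj.2.1
          simp only at he
          omega
        have hkS : r' a = Stgt.ncard := by
          rw [hkT, ← himgY, Set.ncard_image_of_injOn hinjY]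
        have huc : ∀ c' ∈ {i : ℕ | (hd a, i) ∈ γV}, ∀ d ∈ Stgt, d ≤ c' → c' ∈ Stgt := by
          intro c' hc' d hd' hle
          exact ⟨hc', le_trans hd'.2 hle⟩
        have hbij2 := enum_final _ _ (hCfin (hd a)) (hβ' (hd a)) _ (hgmono (hd a))
          (hgbij (hd a)) Stgt hSsubY huc _ hkS
        have hkby : r' a ≤ β' (hd a) := by
          rw [hkS, hβ' (hd a)]
          exact Set.ncard_le_ncard hSsubY (hCfin (hd a))
        have hbij1 : Set.BijOn ((fun i => β (hd a) + 1 - i) ∘ φ)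
            (Set.Icc 1 (r' a)) Stgt := by
          refine Set.BijOn.comp ?_ φbij
          exact himgY ▸ hinjY.bijOn_image
        have hanti1 : StrictAntiOn ((fun i => β (hd a) + 1 - i) ∘ φ)
            (Set.Icc 1 (r' a)) := by
          intro i' hi' j' hj' hlt
          have h1 := φmono hi' hj' hlt
          have t1 := φbij.mapsTo hi'
          have t2 := φbij.mapsTo hj'
          have b1 := t1.2.1
          have b2 := t2.2.1
          show β (hd a) + 1 - φ j' < β (hd a) + 1 - φ i'
          omega
        have hanti2 : StrictAntiOn (fun i' => g (hd a) (β' (hd a) + 1 - i'))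
            (Set.Icc 1 (r' a)) := by
          intro i' hi' j' hj' hlt
          have hi2 := Set.mem_Icc.mp hi'
          have hj2 := Set.mem_Icc.mp hj'
          have hmi : β' (hd a) + 1 - i' ∈ Set.Icc 1 (β' (hd a)) := by
            simp only [Set.mem_Icc]; omega
          have hmj : β' (hd a) + 1 - j' ∈ Set.Icc 1 (β' (hd a)) := by
            simp only [Set.mem_Icc]; omega
          exact hgmono (hd a) hmj hmi (by omega)
        have huniq := antiEnum_unique (r' a) _ _ Stgt hanti1 hanti2 hbij1 hbij2
        refine ⟨?_, hkby⟩
        intro i' hi'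
        have hi2 := Set.mem_Icc.mp hi'
        have e := huniq i' hi'
        simp only [Function.comp] at e
        have t1 := φbij.mapsTo hi'
        have b1 := t1.1
        have b2 := t1.2.1
        rw [ht, ht]
        have e1 : β' (hd a) - i' + 1 = β' (hd a) + 1 - i' := by omega
        rw [e1]
        omega
    exact ⟨⟨hkbx, hkby⟩, φ, φbij, fun i' hi' => ⟨φsrc i' hi', φtgt i' hi'⟩⟩
  -- assemble
  refine ⟨part1, ?_⟩
  intro a p q hp1 hp2 hq1 hq2
  obtain ⟨⟨hkbx, hkby⟩, φ, φbij, φeq⟩ := KEY a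
  have hsrcmem : ∀ i' ∈ Set.Icc 1 (r' a),
      srcIdx tl β' c ε a i' ∈ Set.Icc 1 (β' (tl a)) := by
    intro i' hi'
    have hi2 := Set.mem_Icc.mp hi'
    simp only [Set.mem_Icc]
    unfold srcIdx
    split <;> omega
  have htgtmem : ∀ i' ∈ Set.Icc 1 (r' a),
      tgtIdx hd β' c ε a i' ∈ Set.Icc 1 (β' (hd a)) := by
    intro i' hi'
    have hi2 := Set.mem_Icc.mp hi'
    simp only [Set.mem_Icc]
    unfold tgtIdx
    split <;> omega
  constructor
  · intro h
    unfold UDJoined at h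
    obtain ⟨i', h1, h2, hor⟩ := h
    have hi' : i' ∈ Set.Icc 1 (r' a) := Set.mem_Icc.mpr ⟨h1, h2⟩
    have hφT := φbij.mapsTo hi'
    obtain ⟨e1, e2⟩ := φeq i' hi'
    refine ⟨φ i', hφT.1, hφT.2.1, hφT.2.2, ?_⟩
    rcases hor with ⟨hpe, hqe⟩ | ⟨hqe, hpe⟩
    · left
      exact ⟨by rw [hpe]; exact Prod.ext rfl e1, by rw [hqe]; exact Prod.ext rfl e2⟩
    · right
      exact ⟨by rw [hqe]; exact Prod.ext rfl e1, by rw [hpe]; exact Prod.ext rfl e2⟩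
  · intro h
    obtain ⟨i, h1, h2, h3, hor⟩ := h
    obtain ⟨i', hi', rfl⟩ := φbij.surjOn ⟨h1, h2, h3⟩
    have hIcc := Set.mem_Icc.mp hi'
    obtain ⟨e1, e2⟩ := φeq i' hi'
    unfold UDJoined
    refine ⟨i', hIcc.1, hIcc.2, ?_⟩
    rcases hor with ⟨hpe, hqe⟩ | ⟨hqe, hpe⟩
    · left
      rw [Prod.mk.injEq] at hpe hqe
      obtain ⟨hp1', hpg⟩ := hpe
      obtain ⟨hq1', hqg⟩ := hqe
      constructor
      · have hpg' : g (tl a) p.2 = g (tl a) (srcIdx tl β' c ε a i') := by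
          rw [e1, ← hpg, hp1']
        have hmem : p.2 ∈ Set.Icc 1 (β' (tl a)) := by
          rw [← hp1']; exact Set.mem_Icc.mpr ⟨hp1, hp2⟩
        have := (hgbij (tl a)).injOn hmem (hsrcmem i' hi') hpg'
        rw [← hp1', ← this]
      · have hqg' : g (hd a) q.2 = g (hd a) (tgtIdx hd β' c ε a i') := by
          rw [e2, ← hqg, hq1']
        have hmem : q.2 ∈ Set.Icc 1 (β' (hd a)) := by
          rw [← hq1']; exact Set.mem_Icc.mpr ⟨hq1, hq2⟩
        have := (hgbij (hd a)).injOn hmem (htgtmem i' hi') hqg'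
        rw [← hq1', ← this]
    · right
      rw [Prod.mk.injEq] at hpe hqe
      obtain ⟨hp1', hpg⟩ := hpe
      obtain ⟨hq1', hqg⟩ := hqe
      constructor
      · have hqg' : g (tl a) q.2 = g (tl a) (srcIdx tl β' c ε a i') := by
          rw [e1, ← hqg, hq1']
        have hmem : q.2 ∈ Set.Icc 1 (β' (tl a)) := by
          rw [← hq1']; exact Set.mem_Icc.mpr ⟨hq1, hq2⟩
        have := (hgbij (tl a)).injOn hmem (hsrcmem i' hi') hqg'
        rw [← hq1', ← this]
      · have hpg' : g (hd a) p.2 = g (hd a) (tgtIdx hd β' c ε a i') := by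
          rw [e2, ← hpg, hp1']
        have hmem : p.2 ∈ Set.Icc 1 (β' (hd a)) := by
          rw [← hp1']; exact Set.mem_Icc.mpr ⟨hp1, hp2⟩
        have := (hgbij (hd a)).injOn hmem (htgtmem i' hi') hpg'
        rw [← hp1', ← this]
end

section
/- Let (Q, c) be a colored gentle quiver, β a dimension vector, r a rank map for β, ε a sign function on (Q, c), and Γ = Γ_{Q,c}(β, r, ε) the associated up-and-down graph. Let p = v_j^x eₙ v_{iₙ₋₁}^{xₙ₋₁} ⋯ e₁ v_i^y be a left negative direct path in Γ (so xₙ = x, x₀ = y, and ε(x, c(w(eₙ))) = −1), and let 1 ≤ j′ < j. Then there exists a left negative direct path p′ = v_{j′}^x e′ₙ v_{i′ₙ₋₁}^{xₙ₋₁} ⋯ e′₁ v_{i′}^y in Γ with w(e′_k) = w(e_k) for all k, and moreover i′ < i if and only if ε(y, c(w(e₁))) = 1, and i′ > i if and only if ε(y, c(w(e₁))) = −1. -/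
/-- At an internal vertex of a direct path, consecutive arrows must have different
colors (by the rank condition), the two edge indices agree, and in fact the target
index function of the lower arrow equals the source index function of the upper arrow. -/
lemma junction {V A S : Type}
    (tl hd : A → V) (c : A → S) (β : V → ℕ) (r : A → ℕ) (ε : V → S → ℤ)
    (hr : IsRankMap tl hd c β r) (hε : IsSignFun tl hd c ε)
    (a b : A) (hx : hd a = tl b)
    (ia ib : ℕ) (hia1 : 1 ≤ ia) (hia2 : ia ≤ r a) (hib1 : 1 ≤ ib) (hib2 : ib ≤ r b)
    (heq : tgtIdx hd β c ε a ia = srcIdx tl β c ε b ib) :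
    ia = ib ∧ ∀ j, tgtIdx hd β c ε a j = srcIdx tl β c ε b j := by
  have hβa : ia ≤ β (hd a) := le_trans hia2 (le_trans (hr.1 a) (min_le_right _ _))
  have hβb : ib ≤ β (tl b) := le_trans hib2 (le_trans (hr.1 b) (min_le_left _ _))
  have hβba : β (tl b) = β (hd a) := by rw [hx]
  have hinca : Incident tl hd c (hd a) (c a) := ⟨a, rfl, Or.inr rfl⟩
  have hincb : Incident tl hd c (hd a) (c b) := ⟨b, rfl, Or.inl hx.symm⟩
  by_cases hcab : c a = c b
  · -- same color : contradiction with the rank condition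
    exfalso
    have hrank : r b + r a ≤ β (hd a) := hr.2 a b hx hcab
    have hea : ε (hd a) (c a) = 1 ∨ ε (hd a) (c a) = -1 := hε.1 _ _ hinca
    unfold tgtIdx srcIdx at heq
    rw [hx] at heq
    rcases hea with h1 | h1
    · rw [if_neg (by rw [← hx, h1]; norm_num), if_pos (by rw [← hcab, ← hx, h1])]
        at heq
      rw [hβba] at hβb
      omega
    · rw [if_pos (by rw [← hx, h1]), if_neg (by rw [← hcab, ← hx, h1]; norm_num)] at heq
      rw [hβba] at hβb
      omega
  · -- different colors
    have hanti : ε (hd a) (c a) = - ε (hd a) (c b) := hε.2 _ _ _ hinca hincb hcab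
    have heb : ε (hd a) (c b) = 1 ∨ ε (hd a) (c b) = -1 := hε.1 _ _ hincb
    have key : ∀ j, tgtIdx hd β c ε a j = srcIdx tl β c ε b j := by
      intro j
      unfold tgtIdx srcIdx
      rcases heb with h1 | h1
      · rw [if_pos (by rw [hanti, h1]), if_pos (by rw [← hx, h1])]
      · rw [if_neg (by rw [hanti, h1]; norm_num), if_neg (by rw [← hx, h1]; norm_num),
          hβba]
    refine ⟨?_, key⟩
    have heq2 := heq
    unfold tgtIdx srcIdx at heq2
    rcases heb with h1 | h1
    · rw [if_pos (by rw [hanti, h1]), if_pos (by rw [← hx, h1])] at heq2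
      exact heq2
    · rw [if_neg (by rw [hanti, h1]; norm_num), if_neg (by rw [← hx, h1]; norm_num)]
        at heq2
      rw [hβba] at hβb
      omega

/-- Lemma 2.7 A: sliding a left negative direct path to a lower top
index `j' < j` yields a parallel left negative direct path with the same arrow labels,
whose bottom endpoint moves up iff `ε(y, c(w(e₁))) = 1` and down iff it is `-1`. -/
theorem updown_slide_left_negative
    {V A S : Type} [Fintype V] [Fintype A] [Fintype S]
    (tl hd : A → V) (c : A → S) (β : V → ℕ) (r : A → ℕ) (ε : V → S → ℤ)
    (hg : ColoredGentle tl hd c) (hr : IsRankMap tl hd c β r)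
    (hε : IsSignFun tl hd c ε)
    (n : ℕ) (hn : 1 ≤ n)
    (xs : Fin (n+1) → V) (as : Fin n → A) (ids : Fin n → ℕ) (idx : Fin (n+1) → ℕ)
    (hpath : IsDirectPath tl hd β c ε r n xs as ids idx)
    (hneg : ε (xs (Fin.last n)) (c (as ⟨n-1, by omega⟩)) = -1)
    (j' : ℕ) (hj'1 : 1 ≤ j') (hj'2 : j' < idx (Fin.last n)) :
    ∃ (ids' : Fin n → ℕ) (idx' : Fin (n+1) → ℕ),
      IsDirectPath tl hd β c ε r n xs as ids' idx' ∧
      idx' (Fin.last n) = j' ∧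
      (idx' 0 < idx 0 ↔ ε (xs 0) (c (as ⟨0, by omega⟩)) = 1) ∧
      (idx' 0 > idx 0 ↔ ε (xs 0) (c (as ⟨0, by omega⟩)) = -1) := by
  classical
  have hn0 : 0 < n := hn
  have hn1 : n - 1 < n := Nat.sub_lt hn Nat.one_pos
  -- adjacent edges of the path: indices agree and edge-index functions match
  have hadj : ∀ k : ℕ, ∀ h : k + 1 < n,
      ids ⟨k, Nat.lt_of_succ_lt h⟩ = ids ⟨k+1, h⟩ ∧
      ∀ j, tgtIdx hd β c ε (as ⟨k, Nat.lt_of_succ_lt h⟩) j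
        = srcIdx tl β c ε (as ⟨k+1, h⟩) j := by
    intro k h
    obtain ⟨h1a, h2a, h3a, h4a, h5a, h6a⟩ := hpath ⟨k, Nat.lt_of_succ_lt h⟩
    obtain ⟨h1b, h2b, h3b, h4b, h5b, h6b⟩ := hpath ⟨k+1, h⟩
    have hsc : (⟨k, Nat.lt_of_succ_lt h⟩ : Fin n).succ = (⟨k+1, h⟩ : Fin n).castSucc :=
      rfl
    have hx : hd (as ⟨k, Nat.lt_of_succ_lt h⟩) = tl (as ⟨k+1, h⟩) := by
      rw [h4a, h3b, hsc]
    have heq : tgtIdx hd β c ε (as ⟨k, Nat.lt_of_succ_lt h⟩) (ids ⟨k, Nat.lt_of_succ_lt h⟩)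
        = srcIdx tl β c ε (as ⟨k+1, h⟩) (ids ⟨k+1, h⟩) := by
      rw [← h6a, hsc, h5b]
    exact junction tl hd c β r ε hr hε _ _ hx _ _ h1a h2a h1b h2b heq
  -- the index map `ids` is constant along the path
  have hconst : ∀ k : ℕ, ∀ h : k < n, ids ⟨k, h⟩ = ids ⟨0, hn0⟩ := by
    intro k
    induction k with
    | zero => intro h; rfl
    | succ m ih =>
      intro h
      rw [← (hadj m h).1, ih (Nat.lt_of_succ_lt h)]
  have hsuccl : (⟨n-1, hn1⟩ : Fin n).succ = Fin.last n := by
    ext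
    simp only [Fin.val_succ, Fin.val_last]
    omega
  have hlast : idx (Fin.last n) = ids ⟨n-1, hn1⟩ := by
    obtain ⟨h1, h2, h3, h4, h5, h6⟩ := hpath ⟨n-1, hn1⟩
    rw [hsuccl] at h6
    rw [h6]
    unfold tgtIdx
    rw [if_pos (by rw [h4, hsuccl]; exact hneg)]
  have hids0 : ∀ k : Fin n, ids k = idx (Fin.last n) := by
    intro k
    have h1 := hconst k.val k.isLt
    rw [hlast, hconst (n-1) hn1]
    exact h1
  set ids' : Fin n → ℕ := fun _ => j' with hids'
  set idx' : Fin (n+1) → ℕ :=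
    fun k => if h : k.val < n then srcIdx tl β c ε (as ⟨k.val, h⟩) j' else j' with hidx'
  have hjr : ∀ k : Fin n, j' ≤ r (as k) := by
    intro k
    have h1 := hids0 k
    have h2 := (hpath k).2.1
    omega
  -- comparison of the bottom indices
  have h2 := (hpath ⟨0, hn0⟩).2.1
  have h3 := (hpath ⟨0, hn0⟩).2.2.1
  have h5 := (hpath ⟨0, hn0⟩).2.2.2.2.1
  have hz : ((⟨0, hn0⟩ : Fin n).castSucc : Fin (n+1)) = 0 := by
    ext
    simp
  have hidx0 : idx 0 = srcIdx tl β c ε (as ⟨0, hn0⟩) (ids ⟨0, hn0⟩) := by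
    rw [hz] at h5
    exact h5
  have h0n : ((0 : Fin (n+1)) : ℕ) < n := by
    simpa using hn0
  have hidx'0 : idx' 0 = srcIdx tl β c ε (as ⟨(0 : Fin (n+1)).val, h0n⟩) j' := by
    rw [hidx']
    simp only
    rw [dif_pos h0n]
  have hfin0 : (⟨(0 : Fin (n+1)).val, h0n⟩ : Fin n) = ⟨0, hn0⟩ := by
    ext
    simp
  rw [hfin0] at hidx'0
  have hx0 : xs 0 = tl (as ⟨0, hn0⟩) := by rw [h3, hz]
  have hinc : Incident tl hd c (tl (as ⟨0, hn0⟩)) (c (as ⟨0, hn0⟩)) :=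
    ⟨_, rfl, Or.inl rfl⟩
  have hlt : j' < ids ⟨0, hn0⟩ := by
    have h9 := hids0 ⟨0, hn0⟩
    omega
  have hβ0 : ids ⟨0, hn0⟩ ≤ β (tl (as ⟨0, hn0⟩)) :=
    le_trans h2 (le_trans (hr.1 _) (min_le_left _ _))
  have hkey : (idx' 0 < idx 0 ↔ ε (xs 0) (c (as ⟨0, by omega⟩)) = 1) ∧
      (idx' 0 > idx 0 ↔ ε (xs 0) (c (as ⟨0, by omega⟩)) = -1) := by
    rcases hε.1 _ _ hinc with he | he
    · have he' : ε (xs 0) (c (as ⟨0, by omega⟩)) = 1 := by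
        rw [← hx0] at he
        exact he
      have hlt' : idx' 0 < idx 0 := by
        rw [hidx0, hidx'0]
        unfold srcIdx
        rw [if_pos he, if_pos he]
        exact hlt
      refine ⟨iff_of_true hlt' he', iff_of_false (by omega) ?_⟩
      intro hcon
      have h10 := he'.symm.trans hcon
      norm_num at h10
    · have he' : ε (xs 0) (c (as ⟨0, by omega⟩)) = -1 := by
        rw [← hx0] at he
        exact he
      have hgt' : idx' 0 > idx 0 := by
        rw [hidx0, hidx'0]
        unfold srcIdx
        rw [if_neg (by rw [he]; norm_num), if_neg (by rw [he]; norm_num)]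
        omega
      refine ⟨iff_of_false (by omega) ?_, iff_of_true hgt' he'⟩
      intro hcon
      have h10 := he'.symm.trans hcon
      norm_num at h10
  refine ⟨ids', idx', ?_, ?_, hkey.1, hkey.2⟩
  · intro k
    obtain ⟨h1, h2, h3, h4, h5, h6⟩ := hpath k
    refine ⟨hj'1, hjr k, h3, h4, ?_, ?_⟩
    · have hkl : (k.castSucc : Fin (n+1)).val < n := k.isLt
      rw [hidx']
      simp only
      rw [dif_pos hkl]
      rfl
    · by_cases hks : k.val + 1 < n
      · have hkl : (k.succ : Fin (n+1)).val < n := hks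
        rw [hidx']
        simp only
        rw [dif_pos hkl]
        have hfin : (⟨(k.succ : Fin (n+1)).val, hkl⟩ : Fin n) = ⟨k.val + 1, hks⟩ := rfl
        have hfin2 : (⟨k.val, Nat.lt_of_succ_lt hks⟩ : Fin n) = k := rfl
        rw [hfin]
        have hj := (hadj k.val hks).2 j'
        rw [hfin2] at hj
        exact hj.symm
      · have hkv : k.val + 1 = n := by omega
        have hk' : k = ⟨n-1, hn1⟩ := by
          ext
          simp only
          omega
        have hsucc : (k.succ : Fin (n+1)) = Fin.last n := by
          ext
          simp only [Fin.val_succ, Fin.val_last]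
          omega
        rw [hidx']
        simp only
        rw [dif_neg (by rw [hsucc]; simp)]
        unfold tgtIdx
        rw [if_pos (by rw [h4, hsucc, hk']; exact hneg)]
  · rw [hidx']
    simp only
    rw [dif_neg (by simp)]
end

section
/- Let (Q, c) be a colored gentle quiver, β a dimension vector, r a rank map for β, ε a sign function on (Q, c), and Γ = Γ_{Q,c}(β, r, ε) the associated up-and-down graph. Let y ∈ Q₀, let s ≠ s′ be two colors, and suppose there are arrows a_in, a_out of color s and b_in, b_out of color s′ with h(a_in) = h(b_in) = y and t(a_out) = t(b_out) = y. If some vertex v_j^y of Γ is contained in no edge of Γ (an isolated vertex), then max(r(a_out), r(b_in)) + max(r(a_in), r(b_out)) < β(y). -/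
/-- Lemma 2.8(ii): an isolated vertex at level `y` forces
`max(r(a_out), r(b_in)) + max(r(a_in), r(b_out)) < β(y)`. -/
theorem updown_isolated_vertex_rank
    {V A S : Type} [Fintype V] [Fintype A] [Fintype S]
    (tl hd : A → V) (c : A → S) (β : V → ℕ) (r : A → ℕ) (ε : V → S → ℤ)
    (hg : ColoredGentle tl hd c) (hr : IsRankMap tl hd c β r)
    (hε : IsSignFun tl hd c ε)
    (y : V) (s s' : S) (hss : s ≠ s')
    (ain aout bin bout : A)
    (hain : hd ain = y) (haout : tl aout = y) (hbin : hd bin = y) (hbout : tl bout = y)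
    (hcain : c ain = s) (hcaout : c aout = s) (hcbin : c bin = s') (hcbout : c bout = s')
    (j : ℕ) (hj1 : 1 ≤ j) (hj2 : j ≤ β y)
    (hiso : ∀ (a : A) (i : ℕ), ¬ InEdge tl hd β c ε r a i y j) :
    max (r aout) (r bin) + max (r ain) (r bout) < β y := by
  obtain ⟨hε1, hε2⟩ := hε
  have incs : Incident tl hd c y s := ⟨ain, hcain, Or.inr hain⟩
  have incs' : Incident tl hd c y s' := ⟨bin, hcbin, Or.inr hbin⟩
  have hrel : ε y s = - ε y s' := hε2 y s s' incs incs' hss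
  have hcase : ε y s = 1 ∨ ε y s = -1 := hε1 y s incs
  rcases hcase with hεs | hεs
  · have hεs' : ε y s' = -1 := by omega
    -- aout covers j if j ≤ r aout
    have h1 : r aout < j := by
      by_contra h
      push_neg at h
      exact hiso aout j ⟨hj1, h, Or.inl ⟨haout.symm, by
        simp [srcIdx, haout, hcaout, hεs]⟩⟩
    have h2 : r bin < j := by
      by_contra h
      push_neg at h
      exact hiso bin j ⟨hj1, h, Or.inr ⟨hbin.symm, by
        simp [tgtIdx, hbin, hcbin, hεs']⟩⟩
    have h3 : r ain < β y - j + 1 := by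
      by_contra h
      push_neg at h
      refine hiso ain (β y - j + 1) ⟨by omega, h, Or.inr ⟨hain.symm, ?_⟩⟩
      simp only [tgtIdx, hain, hcain, hεs]
      norm_num
      omega
    have h4 : r bout < β y - j + 1 := by
      by_contra h
      push_neg at h
      refine hiso bout (β y - j + 1) ⟨by omega, h, Or.inl ⟨hbout.symm, ?_⟩⟩
      simp only [srcIdx, hbout, hcbout, hεs']
      norm_num
      omega
    have H1 : max (r aout) (r bin) ≤ j - 1 := max_le (by omega) (by omega)
    have H2 : max (r ain) (r bout) ≤ β y - j := max_le (by omega) (by omega)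
    have h5 : (j - 1) + (β y - j) < β y := by omega
    exact lt_of_le_of_lt (Nat.add_le_add H1 H2) h5
  · have hεs' : ε y s' = 1 := by omega
    have h1 : r ain < j := by
      by_contra h
      push_neg at h
      exact hiso ain j ⟨hj1, h, Or.inr ⟨hain.symm, by
        simp [tgtIdx, hain, hcain, hεs]⟩⟩
    have h2 : r bout < j := by
      by_contra h
      push_neg at h
      exact hiso bout j ⟨hj1, h, Or.inl ⟨hbout.symm, by
        simp [srcIdx, hbout, hcbout, hεs']⟩⟩
    have h3 : r aout < β y - j + 1 := by
      by_contra h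
      push_neg at h
      refine hiso aout (β y - j + 1) ⟨by omega, h, Or.inl ⟨haout.symm, ?_⟩⟩
      simp only [srcIdx, haout, hcaout, hεs]
      norm_num
      omega
    have h4 : r bin < β y - j + 1 := by
      by_contra h
      push_neg at h
      refine hiso bin (β y - j + 1) ⟨by omega, h, Or.inr ⟨hbin.symm, ?_⟩⟩
      simp only [tgtIdx, hbin, hcbin, hεs']
      norm_num
      omega
    have H1 : max (r aout) (r bin) ≤ β y - j := max_le (by omega) (by omega)
    have H2 : max (r ain) (r bout) ≤ j - 1 := max_le (by omega) (by omega)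
    have h5 : (β y - j) + (j - 1) < β y := by omega
    exact lt_of_le_of_lt (Nat.add_le_add H1 H2) h5
end

section
/- Let (Q, c) be a colored gentle quiver, β a dimension vector, r a rank map for β, ε a sign function on (Q, c), and Γ = Γ_{Q,c}(β, r, ε) the associated up-and-down graph. Let y ∈ Q₀, let s ≠ s′ be two colors, let a_in be an arrow with h(a_in) = y and c(a_in) = s, and let b_in, b_out be arrows with h(b_in) = y, t(b_out) = y, and c(b_in) = c(b_out) = s′. If some vertex v_i^y of Γ is contained in exactly one edge of Γ and that edge is labeled a_in (i.e. v_i^y is a 1-target of the edge labeled a_in), then r(b_in) + r(b_out) < β(y). -/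
/-- Lemma 2.8(iii): if `v_i^y` is a 1-target contained only in an edge
labeled `a_in` (of color `s`), then `r(b_in) + r(b_out) < β(y)` for the arrows of the
other color `s'` at `y`. -/
theorem updown_one_target_rank
    {V A S : Type} [Fintype V] [Fintype A] [Fintype S]
    (tl hd : A → V) (c : A → S) (β : V → ℕ) (r : A → ℕ) (ε : V → S → ℤ)
    (hg : ColoredGentle tl hd c) (hr : IsRankMap tl hd c β r)
    (hε : IsSignFun tl hd c ε)
    (y : V) (s s' : S) (hss : s ≠ s')
    (ain bin bout : A)
    (hain : hd ain = y) (hbin : hd bin = y) (hbout : tl bout = y)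
    (hcain : c ain = s) (hcbin : c bin = s') (hcbout : c bout = s')
    (i : ℕ) (hi1 : 1 ≤ i) (hi2 : i ≤ β y)
    (i₀ : ℕ) (hmem : InEdge tl hd β c ε r ain i₀ y i)
    (huniq : ∀ (a : A) (i' : ℕ), InEdge tl hd β c ε r a i' y i → a = ain ∧ i' = i₀) :
    r bin + r bout < β y := by
  by_contra hlt
  push_neg at hlt
  have hsum : r bout + r bin ≤ β y := by
    have := hr.2 bin bout (by rw [hbin, hbout]) (by rw [hcbin, hcbout])
    rwa [hbin] at this
  have heq : r bin + r bout = β y := by omega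
  have hinc : Incident tl hd c y s' := ⟨bout, hcbout, Or.inl hbout⟩
  have hεs' := hε.1 y s' hinc
  have hneq_bin : bin ≠ ain := fun h => hss (by rw [← hcain, ← h, hcbin])
  have hneq_bout : bout ≠ ain := fun h => hss (by rw [← hcain, ← h, hcbout])
  rcases hεs' with h1 | h1
  · by_cases hc : i ≤ r bout
    · have hIn : InEdge tl hd β c ε r bout i y i := by
        refine ⟨hi1, hc, Or.inl ⟨hbout.symm, ?_⟩⟩
        simp [srcIdx, hbout, hcbout, h1]
      exact hneq_bout (huniq bout i hIn).1
    · have hIn : InEdge tl hd β c ε r bin (β y - i + 1) y i := by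
        refine ⟨by omega, by omega, Or.inr ⟨hbin.symm, ?_⟩⟩
        simp only [tgtIdx, hbin, hcbin, h1]
        norm_num
        omega
      exact hneq_bin (huniq bin _ hIn).1
  · by_cases hc : i ≤ r bin
    · have hIn : InEdge tl hd β c ε r bin i y i := by
        refine ⟨hi1, hc, Or.inr ⟨hbin.symm, ?_⟩⟩
        simp [tgtIdx, hbin, hcbin, h1]
      exact hneq_bin (huniq bin i hIn).1
    · have hIn : InEdge tl hd β c ε r bout (β y - i + 1) y i := by
        refine ⟨by omega, by omega, Or.inl ⟨hbout.symm, ?_⟩⟩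
        simp only [srcIdx, hbout, hcbout, h1]
        norm_num
        omega
      exact hneq_bout (huniq bout _ hIn).1
end

section
/- Let k be a field, (Q, c) a colored gentle quiver, β a dimension vector, r a rank map for β, ε a sign function on (Q, c), and Γ = Γ_{Q,c}(β, r, ε) the associated up-and-down graph. For each arrow a let M_a be a β(h(a)) × β(t(a)) matrix over k whose (k, j) entry is nonzero only if the vertices v_j^{t(a)} and v_k^{h(a)} are joined in Γ by an edge labeled a. Then for every pair of arrows a₁, a₂ with h(a₁) = t(a₂) and c(a₁) = c(a₂), the matrix product M_{a₂} · M_{a₁} is the zero matrix. In other words, every family of matrices supported on the edges of the up-and-down graph satisfies the monochromatic length-two relations of the gentle string algebra. -/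
/-- Proposition 3.3: any family of matrices supported on the edges of
the up-and-down graph satisfies the monochromatic length-two relations of the gentle
string algebra. -/
theorem updown_matrices_satisfy_relations
    {V A S k : Type} [Field k] [Fintype V] [Fintype A] [Fintype S]
    (tl hd : A → V) (c : A → S) (β : V → ℕ) (r : A → ℕ) (ε : V → S → ℤ)
    (hg : ColoredGentle tl hd c) (hr : IsRankMap tl hd c β r)
    (hε : IsSignFun tl hd c ε)
    (M : ∀ a : A, Matrix (Fin (β (hd a))) (Fin (β (tl a))) k)
    (hsupp : ∀ (a : A) (p : Fin (β (hd a))) (q : Fin (β (tl a))), M a p q ≠ 0 →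
      ∃ i : ℕ, 1 ≤ i ∧ i ≤ r a ∧ (q : ℕ) + 1 = srcIdx tl β c ε a i ∧
        (p : ℕ) + 1 = tgtIdx hd β c ε a i)
    (a₁ a₂ : A) (e : hd a₁ = tl a₂) (hc : c a₁ = c a₂) :
    M a₂ * (M a₁).submatrix (Fin.cast (congrArg β e.symm)) id = 0 := by
  obtain ⟨hrle, hrcomp⟩ := hr
  have hεv := hε.1 (hd a₁) (c a₁) ⟨a₁, rfl, Or.inr rfl⟩
  have hcomp := hrcomp a₁ a₂ e hc
  ext p q
  rw [Matrix.mul_apply, Matrix.zero_apply]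
  apply Finset.sum_eq_zero
  intro m _
  by_contra h
  have h2 : M a₂ p m ≠ 0 := fun h' => h (by simp [h'])
  have h1 : (M a₁).submatrix (Fin.cast (congrArg β e.symm)) id m q ≠ 0 :=
    fun h' => h (by rw [h', mul_zero])
  obtain ⟨i₂, hi₂1, hi₂2, hm₂, -⟩ := hsupp a₂ p m h2
  obtain ⟨i₁, hi₁1, hi₁2, -, hm₁⟩ := hsupp a₁ (Fin.cast (congrArg β e.symm) m) q h1
  have hcast : ((Fin.cast (congrArg β e.symm) m : Fin (β (hd a₁))) : ℕ) = (m : ℕ) := rfl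
  unfold srcIdx at hm₂
  unfold tgtIdx at hm₁
  rw [hcast] at hm₁
  have key : ε (tl a₂) (c a₂) = ε (hd a₁) (c a₁) := by rw [e, hc]
  have hβ : β (tl a₂) = β (hd a₁) := by rw [e]
  rw [key] at hm₂
  rcases hεv with h1' | h1'
  · rw [if_pos h1'] at hm₂
    rw [if_neg (by rw [h1']; decide)] at hm₁
    omega
  · rw [if_neg (by rw [h1']; decide)] at hm₂
    rw [if_pos h1'] at hm₁
    omega
end
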